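/- arXiv:0909.5313 — 7 statements merged into one kernel-verified Lean document; each statement's English description precedes it below -/
import Mathlib

section
/- Let G be a finite group with |G| ≥ 2 and let ε > 0 be a real number. Then for all sufficiently large n the following holds: for every subgroup H of G^n and all natural numbers k and r with |H| ≤ |G|^k, r ≤ n/2, and k + r ≤ n·(1 - H₂(r/n)/log₂|G| - ε), there exists x ∈ G^n such that the Hamming distance Δ(x,h) > r for every h ∈ H. Here H₂(p) = -p·log₂ p - (1-p)·log₂(1-p) denotes the binary entropy function (with H₂(0) = 0). -/
/-!
A union bound. The Hamming balls of radius `r` around the points of `H` cover at most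
`|H| · C(n, r) · |G|^r ≤ |G|^k · 2^(n H₂(r/n)) · |G|^r` points of `G^n`, and the hypothesis on
`k + r`, with the slack `ε n > 0`, makes this smaller than `|G|^n`. The entropy bound on `C(n, r)`
comes from the single term `C(n, r) pʳ (1 - p)ⁿ⁻ʳ ≤ (p + (1 - p))ⁿ = 1` at `p = r / n`.
-/

/-- The binary entropy function `H₂(p) = -p·log₂ p - (1-p)·log₂(1-p)`
(with the convention `H₂(0) = 0`, which holds since `Real.logb 2 0 = 0`). -/
noncomputable def binEntropy2 (p : ℝ) : ℝ :=
  -p * Real.logb 2 p - (1 - p) * Real.logb 2 (1 - p)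

open Finset Real

theorem choose_mul_pow_mul_pow_le_one {p : ℝ} (hp₀ : 0 ≤ p) (hp₁ : p ≤ 1) {n r : ℕ}
    (hrn : r ≤ n) : n.choose r * (p ^ r * (1 - p) ^ (n - r)) ≤ 1 := by
  calc (n.choose r : ℝ) * (p ^ r * (1 - p) ^ (n - r))
      ≤ ∑ i ∈ range (n + 1), p ^ i * (1 - p) ^ (n - i) * n.choose i := by
        rw [mul_comm]
        refine single_le_sum (f := fun i => p ^ i * (1 - p) ^ (n - i) * n.choose i)
          (fun i _ => by have := sub_nonneg.2 hp₁; positivity) (mem_range_succ_iff.2 hrn)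
    _ = 1 := by rw [← add_pow, add_sub_cancel, one_pow]

theorem natCast_div_pow_self_eq_two_rpow {m n : ℕ} (hn : 0 < n) :
    ((m : ℝ) / n) ^ m = 2 ^ (m * logb 2 (m / n)) := by
  rcases Nat.eq_zero_or_pos m with rfl | hm
  · simp
  rw [mul_comm, rpow_mul zero_le_two, rpow_logb two_pos one_lt_two.ne' (by positivity),
    rpow_natCast]

theorem choose_le_two_rpow_binEntropy2 {n r : ℕ} (hrn : r ≤ n) :
    (n.choose r : ℝ) ≤ 2 ^ (n * binEntropy2 (r / n)) := by
  rcases Nat.eq_zero_or_pos n with rfl | hn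
  · simp [Nat.le_zero.mp hrn]
  have hcompl : 1 - (r : ℝ) / n = ((n - r : ℕ) : ℝ) / n := by
    rw [Nat.cast_sub hrn]; field_simp
  have hweight : ((r : ℝ) / n) ^ r * (1 - (r : ℝ) / n) ^ (n - r) =
      2 ^ (-(n * binEntropy2 (r / n))) := by
    rw [hcompl, natCast_div_pow_self_eq_two_rpow hn, natCast_div_pow_self_eq_two_rpow hn,
      ← rpow_add two_pos, binEntropy2, hcompl]
    congr 1
    field_simp
    ring
  have hp₁ : (r : ℝ) / n ≤ 1 := div_le_one_of_le₀ (by exact_mod_cast hrn) (by positivity)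
  calc (n.choose r : ℝ)
      = n.choose r * (((r : ℝ) / n) ^ r * (1 - (r : ℝ) / n) ^ (n - r)) *
          2 ^ (n * binEntropy2 (r / n)) := by
        rw [hweight, mul_assoc, ← rpow_add two_pos, neg_add_cancel, rpow_zero, mul_one]
    _ ≤ 2 ^ (n * binEntropy2 (r / n)) :=
        mul_le_of_le_one_left (by positivity)
          (choose_mul_pow_mul_pow_le_one (by positivity) hp₁ hrn)

theorem card_hammingBall_le {ι β : Type*} [Fintype ι] [DecidableEq ι] [Fintype β] [DecidableEq β]
    (x : ι → β) {r : ℕ} (hr : r ≤ Fintype.card ι) :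
    #{y | hammingDist y x ≤ r} ≤ (Fintype.card ι).choose r * Fintype.card β ^ r := by
  let agreeOff (s : Finset ι) : Finset (ι → β) :=
    Fintype.piFinset fun i => if i ∈ s then univ else {x i}
  have hcover : ({y | hammingDist y x ≤ r} : Finset (ι → β)) ⊆
      (powersetCard r univ).biUnion agreeOff := by
    intro y hy
    obtain ⟨s, hds, -, hs⟩ := exists_subsuperset_card_eq (subset_univ {i | y i ≠ x i})
      (mem_filter.1 hy).2 (by simpa using hr)
    refine mem_biUnion.2 ⟨s, mem_powersetCard.2 ⟨subset_univ s, hs⟩, ?_⟩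
    refine Fintype.mem_piFinset.2 fun i => ?_
    split_ifs with hi
    · exact mem_univ _
    · exact mem_singleton.2 (not_not.1 fun h => hi (hds (mem_filter.2 ⟨mem_univ i, h⟩)))
  have hpiece : ∀ s ∈ powersetCard r (univ : Finset ι), #(agreeOff s) = Fintype.card β ^ r := by
    intro s hs
    rw [Fintype.card_piFinset, ← (mem_powersetCard.1 hs).2]
    simp [apply_ite, prod_ite_mem]
  calc _ ≤ _ := card_le_card hcover
    _ ≤ _ := card_biUnion_le_card_mul _ _ _ fun s hs => (hpiece s hs).le
    _ = _ := by rw [card_powersetCard, card_univ]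

theorem exists_forall_lt_hammingDist {ι β : Type*} [Fintype ι] [DecidableEq ι] [Fintype β]
    [DecidableEq β] (S : Finset (ι → β)) {r : ℕ} (hr : r ≤ Fintype.card ι)
    (hS : #S * ((Fintype.card ι).choose r * Fintype.card β ^ r) <
      Fintype.card β ^ Fintype.card ι) :
    ∃ x : ι → β, ∀ h ∈ S, r < hammingDist x h := by
  have hcard : #(S.biUnion fun h => {y | hammingDist y h ≤ r}) < #(univ : Finset (ι → β)) := by
    rw [card_univ, Fintype.card_fun]
    exact (card_biUnion_le_card_mul _ _ _ fun h _ => card_hammingBall_le h hr).trans_lt hS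
  obtain ⟨x, -, hx⟩ := exists_mem_notMem_of_card_lt_card hcard
  exact ⟨x, fun h hh => not_le.1 fun hle =>
    hx (mem_biUnion.2 ⟨h, hh, mem_filter.2 ⟨mem_univ x, hle⟩⟩)⟩

theorem two_rpow_eq_rpow_div_logb {q : ℝ} (hq : 1 < q) (x : ℝ) :
    (2 : ℝ) ^ x = q ^ (x / logb 2 q) := by
  have hL : logb 2 q ≠ 0 := (logb_pos one_lt_two hq).ne'
  calc (2 : ℝ) ^ x = (2 ^ logb 2 q) ^ (x / logb 2 q) := by
        rw [← rpow_mul zero_le_two, mul_div_cancel₀ _ hL]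
    _ = q ^ (x / logb 2 q) := by rw [rpow_logb two_pos one_lt_two.ne' (zero_lt_one.trans hq)]

theorem pow_mul_two_rpow_mul_pow_lt_pow {q : ℝ} (hq : 1 < q) {n k r : ℕ} {h ε : ℝ}
    (hn : 0 < n) (hε : 0 < ε) (hkr : (k : ℝ) + r ≤ n * (1 - h / logb 2 q - ε)) :
    q ^ k * (2 ^ (n * h) * q ^ r) < q ^ n := by
  have hexp : (k : ℝ) + (n * h / logb 2 q + r) < n := by
    have : (0 : ℝ) < n * ε := mul_pos (Nat.cast_pos.2 hn) hε
    rw [mul_div_assoc]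
    linarith
  rw [two_rpow_eq_rpow_div_logb hq, ← rpow_natCast, ← rpow_natCast, ← rpow_natCast,
    ← rpow_add (zero_lt_one.trans hq), ← rpow_add (zero_lt_one.trans hq)]
  exact rpow_lt_rpow_of_exponent_lt hq hexp

theorem remote_point_existence_entropy_bound
    (G : Type) [Group G] [Fintype G] [DecidableEq G]
    (hG : 2 ≤ Fintype.card G)
    (ε : ℝ) (hε : 0 < ε) :
    ∃ N : ℕ, ∀ n : ℕ, N ≤ n →
      ∀ (H : Subgroup (Fin n → G)) (k r : ℕ),
        Nat.card H ≤ Fintype.card G ^ k →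
        (r : ℝ) ≤ (n : ℝ) / 2 →
        (k : ℝ) + (r : ℝ) ≤
          (n : ℝ) * (1 - binEntropy2 ((r : ℝ) / (n : ℝ)) / Real.logb 2 (Fintype.card G) - ε) →
        ∃ x : Fin n → G, ∀ h ∈ H, r < hammingDist x h := by
  classical
  refine ⟨1, fun n hn H k r hHk hr hkr => ?_⟩
  have hrn : r ≤ n := by
    have : (r : ℝ) ≤ n := by linarith [(Nat.cast_nonneg n : (0 : ℝ) ≤ n)]
    exact_mod_cast this
  have hq : (1 : ℝ) < Fintype.card G := by exact_mod_cast hG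
  have hbudget : (Nat.card H : ℝ) * (n.choose r * Fintype.card G ^ r) <
      (Fintype.card G : ℝ) ^ n :=
    calc _ ≤ (Fintype.card G : ℝ) ^ k * (2 ^ (n * binEntropy2 (r / n)) * Fintype.card G ^ r) := by
          gcongr
          exacts [by exact_mod_cast hHk, choose_le_two_rpow_binEntropy2 hrn]
      _ < _ := pow_mul_two_rpow_mul_pow_lt_pow hq hn hε hkr
  obtain ⟨x, hx⟩ := exists_forall_lt_hammingDist (H : Set (Fin n → G)).toFinset (r := r)
    (by rwa [Fintype.card_fin]) (by
      rw [Set.toFinset_card, Fintype.card_fin, ← Nat.card_eq_fintype_card]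
      exact_mod_cast hbudget)
  exact ⟨x, fun h hh => hx h (Set.mem_toFinset.2 hh)⟩
end

section
/- Let G be a finite abelian group with |G| ≥ 2 and let d > 0 be a real constant. Then for all sufficiently large n the following holds: if S is a nonempty finite multiset of elements of G^n that is symmetric (the multiset image of S under inversion equals S) and (1/n^d)-biased (for every nontrivial character χ of G^n, |∑_{s∈S} χ(s)| ≤ |S|/n^d, the sum counted with multiplicity), then for every subgroup H of G^n with |H| ≤ |G|^{2n/3}, the number of elements of S lying in H, counted with multiplicity, is at most |S|/n^{d/2}. -/
/-!
Counting with the characters of `A ⧸ H` gives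
`[A : H] · |S ∩ H| = ∑_{ψ ∈ (A ⧸ H)^} ∑_{s ∈ S} ψ(s H)`. The trivial character contributes `|S|`
and each of the other `[A : H] - 1` characters, pulled back to `A`, contributes at most
`|S| / n^d` by the bias assumption, so `|S ∩ H| ≤ |S| / [A : H] + |S| / n^d`. For `A = G^n` and
`|H| ≤ |G|^(2n/3)` the index is at least `2^(n/3)`, which eventually beats `2 n^(d/2)`.
-/

open Filter Finset

namespace Subgroup

variable {A : Type*} [CommGroup A] (H : Subgroup A)

/-- Characters of `A ⧸ H` are taken as `AddChar (Additive (A ⧸ H)) ℂ` because Mathlib's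
orthogonality relations are stated for additive characters. -/
def quotientChar (ψ : AddChar (Additive (A ⧸ H)) ℂ) : A →* ℂ :=
  ψ.toMonoidHom.comp (QuotientGroup.mk' H)

lemma quotientChar_ne_one {ψ : AddChar (Additive (A ⧸ H)) ℂ} (hψ : ψ ≠ 1) :
    H.quotientChar ψ ≠ 1 := by
  refine fun h => hψ (AddChar.ext _ _ fun q => ?_)
  obtain ⟨a, rfl⟩ := QuotientGroup.mk'_surjective H q
  exact DFunLike.congr_fun h a

@[simp]
lemma quotientChar_one : H.quotientChar 1 = 1 := rfl

variable [H.FiniteIndex]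

lemma norm_quotientChar_apply (ψ : AddChar (Additive (A ⧸ H)) ℂ) (a : A) :
    ‖H.quotientChar ψ a‖ = 1 :=
  ψ.norm_apply _

lemma card_addChar_quotient : Fintype.card (AddChar (Additive (A ⧸ H)) ℂ) = H.index := by
  have := Fintype.ofFinite (Additive (A ⧸ H))
  rw [AddChar.card_eq, ← Nat.card_eq_fintype_card]
  rfl

open scoped Classical in
lemma sum_quotientChar_apply (a : A) :
    ∑ ψ, H.quotientChar ψ a = if a ∈ H then (H.index : ℂ) else 0 := by
  have := Fintype.ofFinite (A ⧸ H)
  refine (AddChar.sum_apply_eq_ite (Additive.ofMul (a : A ⧸ H))).trans ?_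
  simp [index, Nat.card_eq_fintype_card]

lemma sum_sum_map_quotientChar (S : Multiset A) [DecidablePred (· ∈ H)] :
    ∑ ψ, (S.map (H.quotientChar ψ)).sum = H.index * (S.filter (· ∈ H)).card := by
  induction S using Multiset.induction_on with
  | empty => simp
  | cons a S ih =>
    by_cases ha : a ∈ H <;>
      simp [Finset.sum_add_distrib, sum_quotientChar_apply, ih, ha, mul_add, add_comm]

theorem card_filter_mem_le_of_biased (S : Multiset A) [DecidablePred (· ∈ H)] {B : ℝ}
    (hB : 0 ≤ B)
    (hS : ∀ χ : A →* ℂ, (∀ x, ‖χ x‖ = 1) → χ ≠ 1 → ‖(S.map χ).sum‖ ≤ B) :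
    ((S.filter (· ∈ H)).card : ℝ) ≤ S.card / H.index + B := by
  have hidx : (0 : ℝ) < H.index := by exact_mod_cast Nat.pos_of_ne_zero H.index_ne_zero_of_finite
  have hbound : (H.index : ℝ) * (S.filter (· ∈ H)).card ≤ S.card + H.index * B :=
    calc (H.index : ℝ) * (S.filter (· ∈ H)).card
        = ‖∑ ψ, (S.map (H.quotientChar ψ)).sum‖ := by
          rw [sum_sum_map_quotientChar]; norm_cast
      _ ≤ ∑ ψ, ‖(S.map (H.quotientChar ψ)).sum‖ := norm_sum_le _ _
      _ = ‖(S.map (H.quotientChar 1)).sum‖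
            + ∑ ψ ∈ univ.erase (1 : AddChar _ ℂ), ‖(S.map (H.quotientChar ψ)).sum‖ :=
          (add_sum_erase _ _ (mem_univ 1)).symm
      _ ≤ S.card + (univ.erase (1 : AddChar _ ℂ)).card • B := by
          gcongr
          · simp
          · exact sum_le_card_nsmul _ _ _ fun ψ hψ =>
              hS _ (H.norm_quotientChar_apply ψ) (H.quotientChar_ne_one (ne_of_mem_erase hψ))
      _ ≤ S.card + H.index * B := by
          rw [nsmul_eq_mul, ← card_addChar_quotient H]
          gcongr
          exact_mod_cast card_erase_le
  rw [div_add' _ _ _ hidx.ne', le_div_iff₀ hidx]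
  linarith

end Subgroup

lemma two_rpow_div_three_le_index {G : Type*} [Group G] [Fintype G]
    (hG : 2 ≤ Fintype.card G) {n : ℕ} (H : Subgroup (Fin n → G))
    (hH : (Nat.card H : ℝ) ≤ (Fintype.card G : ℝ) ^ ((2 * (n : ℝ)) / 3)) :
    (2 : ℝ) ^ ((n : ℝ) / 3) ≤ H.index := by
  have hG' : (2 : ℝ) ≤ Fintype.card G := by exact_mod_cast hG
  have hHpos : (0 : ℝ) < Nat.card H := by exact_mod_cast Nat.card_pos
  have hmul : (H.index : ℝ) * Nat.card H = (Fintype.card G : ℝ) ^ (n : ℝ) := by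
    rw [Real.rpow_natCast]
    exact_mod_cast (H.index_mul_card).trans (by simp [Nat.card_eq_fintype_card])
  calc (2 : ℝ) ^ ((n : ℝ) / 3)
      ≤ (Fintype.card G : ℝ) ^ ((n : ℝ) / 3) := by gcongr
    _ = (Fintype.card G : ℝ) ^ (n : ℝ) / (Fintype.card G : ℝ) ^ ((2 * (n : ℝ)) / 3) := by
        rw [← Real.rpow_sub (by linarith)]; ring_nf
    _ ≤ (Fintype.card G : ℝ) ^ (n : ℝ) / Nat.card H := by gcongr
    _ = H.index := by rw [← hmul, mul_div_cancel_right₀ _ hHpos.ne']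

lemma eventually_two_mul_rpow_le_two_rpow_div_three (s : ℝ) :
    ∀ᶠ n : ℕ in atTop, 2 * (n : ℝ) ^ s ≤ 2 ^ ((n : ℝ) / 3) := by
  have hlog : 0 < Real.log 2 / 3 := by positivity
  have hsmall := (isLittleO_rpow_exp_pos_mul_atTop s hlog).bound (c := 1 / 2) (by norm_num)
  filter_upwards [tendsto_natCast_atTop_atTop.eventually hsmall] with n hn
  have hexp : Real.exp (Real.log 2 / 3 * n) = 2 ^ ((n : ℝ) / 3) := by
    rw [Real.rpow_def_of_pos two_pos]; ring_nf
  rw [Real.norm_of_nonneg (by positivity), Real.norm_of_nonneg (by positivity), hexp] at hn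
  linarith

lemma div_add_div_sq_le_div {c y D : ℝ} (hc : 0 ≤ c) (hy : 2 ≤ y) (hD : 2 * y ≤ D) :
    c / D + c / y ^ 2 ≤ c / y := by
  have hy0 : 0 < y := by linarith
  calc c / D + c / y ^ 2 ≤ c / (2 * y) + c / (2 * y) := by
        gcongr
        nlinarith
    _ = c / y := by field_simp; ring

open scoped Classical in
theorem biased_set_small_intersection_with_subgroups_general
    (G : Type) [CommGroup G] [Fintype G]
    (hG : 2 ≤ Fintype.card G)
    (d : ℝ) (hd : 0 < d) :
    ∃ N : ℕ, ∀ n : ℕ, N ≤ n →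
      ∀ S : Multiset (Fin n → G), S ≠ 0 →
        S.map (fun s => s⁻¹) = S →
        (∀ χ : (Fin n → G) →* ℂ, (∀ x, ‖χ x‖ = 1) → χ ≠ 1 →
          ‖(S.map (fun s => χ s)).sum‖ ≤ (S.card : ℝ) / (n : ℝ) ^ d) →
        ∀ H : Subgroup (Fin n → G),
          (Nat.card H : ℝ) ≤ (Fintype.card G : ℝ) ^ ((2 * (n : ℝ)) / 3) →
          ((S.filter (fun s => s ∈ H)).card : ℝ) ≤ (S.card : ℝ) / (n : ℝ) ^ (d / 2) := by
  have hlarge := ((tendsto_rpow_atTop (by linarith : 0 < d / 2)).comp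
    tendsto_natCast_atTop_atTop).eventually_ge_atTop 2
  obtain ⟨N, hN⟩ := eventually_atTop.mp
    ((eventually_two_mul_rpow_le_two_rpow_div_three (d / 2)).and hlarge)
  refine ⟨N, fun n hn S _ _ hbias H hH => ?_⟩
  obtain ⟨hgrowth, htwo⟩ := hN n hn
  have hsq : (n : ℝ) ^ d = ((n : ℝ) ^ (d / 2)) ^ 2 := by
    rw [← Real.rpow_natCast, ← Real.rpow_mul n.cast_nonneg]; ring_nf
  calc ((S.filter (fun s => s ∈ H)).card : ℝ)
      ≤ S.card / H.index + S.card / (n : ℝ) ^ d :=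
        H.card_filter_mem_le_of_biased S (by positivity) hbias
    _ ≤ S.card / (n : ℝ) ^ (d / 2) := by
        rw [hsq]
        exact div_add_div_sq_le_div (by positivity) htwo
          (hgrowth.trans (two_rpow_div_three_le_index hG H hH))

open scoped Classical in
theorem biased_set_small_intersection_with_subgroups
    (G : Type) [CommGroup G] [Fintype G] [DecidableEq G]
    (hG : 2 ≤ Fintype.card G)
    (d : ℝ) (hd : 0 < d) :
    ∃ N : ℕ, ∀ n : ℕ, N ≤ n →
      ∀ S : Multiset (Fin n → G), S ≠ 0 →
        S.map (fun s => s⁻¹) = S →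
        (∀ χ : (Fin n → G) →* ℂ, (∀ x, ‖χ x‖ = 1) → χ ≠ 1 →
          ‖(S.map (fun s => χ s)).sum‖ ≤ (S.card : ℝ) / (n : ℝ) ^ d) →
        ∀ H : Subgroup (Fin n → G),
          (Nat.card H : ℝ) ≤ (Fintype.card G : ℝ) ^ ((2 * (n : ℝ)) / 3) →
          ((S.filter (fun s => s ∈ H)).card : ℝ) ≤ (S.card : ℝ) / (n : ℝ) ^ (d / 2) :=
  biased_set_small_intersection_with_subgroups_general G hG d hd
end

section
/- Let G be a finite group with |G| ≥ 2 and let c > 0 be a real constant. Then for all sufficiently large n the following holds: for every subgroup H of G^n with |H| ≤ |G|^{n/2}, there exist m ≤ n^{10c} subgroups H_1, H_2, …, H_m of G^n such that |H_i| ≤ |G|^{2n/3} for every i, and every x ∈ G^n with Δ(x,H) ≤ c·log₂ n lies in H_i for some i (i.e., the Hamming ball B(H, c·log₂ n) is contained in the union of the H_i). -/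
/-!
Put `r = ⌈c log₂ n⌉` and split the `n` coordinates into their `7r` residue classes mod `7r`,
each of size at most `n/(7r) + 1`. If `x` is within distance `r` of `h ∈ H`, then `x` and `h`
differ only on a union `U` of at most `r` classes, so `|U| ≤ n/7 + r ≤ n/6` and `x` lies in
`H ⊔ G^U`. As `G^U` is normal, this subgroup has order at most `|H| |G|^(n/6) ≤ |G|^(2n/3)`,
and there are at most `2^(7r) ≤ n^(10c)` such unions.
-/

open Finset Filter Asymptotics

namespace Subgroup

variable {η : Type*} {f : η → Type*} [∀ i, Group (f i)]

instance normal_pi (I : Set η) (H : ∀ i, Subgroup (f i)) [∀ i, (H i).Normal] :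
    (pi I H).Normal where
  conj_mem x hx g i hi := (‹∀ i, (H i).Normal› i).conj_mem _ (hx i hi) (g i)

variable {G : Type*} [Group G]

theorem card_sup_le_of_normal [Finite G] (H N : Subgroup G) [N.Normal] :
    Nat.card ↥(H ⊔ N) ≤ Nat.card H * Nat.card N := by
  rw [← SetLike.coe_sort_coe, mul_normal]
  exact Set.natCard_mul_le

variable {ι : Type*}

def supportedOn (G : Type*) [Group G] (U : Finset ι) : Subgroup (ι → G) :=
  pi (↑U)ᶜ fun _ => ⊥

theorem mem_supportedOn {U : Finset ι} {x : ι → G} :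
    x ∈ supportedOn G U ↔ ∀ i ∉ U, x i = 1 := by
  simp [supportedOn, mem_pi]

instance (U : Finset ι) : (supportedOn G U).Normal := normal_pi _ _

theorem card_supportedOn_le [Fintype G] (U : Finset ι) :
    Nat.card (supportedOn G U) ≤ Fintype.card G ^ #U := by
  have hinj : Function.Injective fun (x : supportedOn G U) (i : U) => (x : ι → G) i := by
    intro x y hxy
    ext i
    by_cases hi : i ∈ U
    · exact congrFun hxy ⟨i, hi⟩
    · rw [mem_supportedOn.mp x.2 i hi, mem_supportedOn.mp y.2 i hi]
  exact (Nat.card_le_card_of_injective _ hinj).trans_eq (by rw [Nat.card_fun]; simp)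

theorem mem_sup_supportedOn {H : Subgroup (ι → G)} {U : Finset ι} {x h : ι → G}
    (hh : h ∈ H) (hU : ∀ i, x i ≠ h i → i ∈ U) : x ∈ H ⊔ supportedOn G U := by
  have hd : h⁻¹ * x ∈ supportedOn G U := mem_supportedOn.mpr fun i hi => by
    simp [of_not_not fun hne => hi (hU i hne)]
  simpa using mul_mem_sup hh hd

end Subgroup

theorem Finset.card_filter_mem_le_mul {ι κ : Type*} [Fintype ι] [DecidableEq κ] (β : ι → κ)
    {k : ℕ} (hβ : ∀ j, #{i | β i = j} ≤ k) (T : Finset κ) : #{i | β i ∈ T} ≤ k * #T :=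
  card_le_mul_card_image_of_maps_to (f := β) (by simp) k fun j _ =>
    (card_le_card (filter_subset_filter _ (subset_univ _))).trans (by simpa using hβ j)

theorem Fin.card_filter_val_mod_eq_le (n t j : ℕ) :
    #{i : Fin n | (i : ℕ) % t = j} ≤ n / t + 1 := by
  calc #{i : Fin n | (i : ℕ) % t = j} ≤ #(range (n / t + 1)) := by
        refine card_le_card_of_injOn (fun i => (i : ℕ) / t) ?_ ?_
        · intro i _
          simpa [Nat.lt_succ_iff] using Nat.div_le_div_right i.2.le
        · intro i₁ h₁ i₂ h₂ hdiv
          simp only [coe_filter, mem_univ, true_and] at h₁ h₂ hdiv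
          ext
          rw [← Nat.mod_add_div i₁ t, ← Nat.mod_add_div i₂ t, h₁, h₂, hdiv]
    _ = n / t + 1 := card_range _

open Subgroup in
theorem exists_subgroups_cover_hammingBall {G ι κ : Type*} [Group G] [Fintype G] [DecidableEq G]
    [Fintype ι] [Fintype κ] [DecidableEq κ] (β : ι → κ) {k : ℕ}
    (hβ : ∀ j, #{i | β i = j} ≤ k) (H : Subgroup (ι → G)) (r : ℕ) :
    ∃ (m : ℕ) (Hs : Fin m → Subgroup (ι → G)), m ≤ 2 ^ Fintype.card κ ∧
      (∀ i, Nat.card (Hs i) ≤ Nat.card H * Fintype.card G ^ (k * r)) ∧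
      ∀ x : ι → G, (∃ h ∈ H, hammingDist x h ≤ r) → ∃ i, x ∈ Hs i := by
  classical
  let K : {T : Finset κ // #T ≤ r} → Subgroup (ι → G) := fun T =>
    H ⊔ supportedOn G {i | β i ∈ T.1}
  have hK : ∀ T, Nat.card (K T) ≤ Nat.card H * Fintype.card G ^ (k * r) := fun ⟨T, hT⟩ =>
    calc Nat.card (K ⟨T, hT⟩) ≤ Nat.card H * Nat.card (supportedOn G {i | β i ∈ T}) :=
          card_sup_le_of_normal _ _
      _ ≤ Nat.card H * Fintype.card G ^ (k * r) := by
          gcongr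
          refine (card_supportedOn_le _).trans (Nat.pow_le_pow_right Fintype.card_pos ?_)
          exact (card_filter_mem_le_mul β hβ T).trans (Nat.mul_le_mul_left k hT)
  let e := Fintype.equivFin {T : Finset κ // #T ≤ r}
  refine ⟨_, K ∘ e.symm, ?_, fun i => hK (e.symm i), ?_⟩
  · simpa using Fintype.card_subtype_le (fun T : Finset κ => #T ≤ r)
  · rintro x ⟨h, hh, hd⟩
    let T := image β {i | x i ≠ h i}
    refine ⟨e ⟨T, card_image_le.trans hd⟩, ?_⟩
    simpa [K] using mem_sup_supportedOn hh fun i hi => by simp [T]; exact ⟨i, hi, rfl⟩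

theorem eventually_logb_bounds {c : ℝ} (hc : 0 < c) :
    ∀ᶠ x : ℝ in atTop, c * Real.logb 2 x + 1 ≤ x / 42 ∧ 7 ≤ 3 * c * Real.logb 2 x := by
  have hlittle : (fun x => c * Real.logb 2 x + 1) =o[atTop] id := by
    have := (Real.isLittleO_log_id_atTop.const_mul_left (c / Real.log 2)).add
      (isLittleO_const_id_atTop (1 : ℝ))
    refine this.congr_left fun x => ?_
    rw [Real.logb, mul_div_assoc', div_mul_eq_mul_div]
  filter_upwards [hlittle.def (by norm_num : (0 : ℝ) < 1 / 42), eventually_ge_atTop 0,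
    (Real.tendsto_logb_atTop one_lt_two).eventually_ge_atTop (7 / (3 * c))] with x hsmall hx hlog
  refine ⟨?_, by rwa [div_le_iff₀' (by positivity)] at hlog⟩
  rw [id, Real.norm_of_nonneg hx] at hsmall
  linarith [Real.le_norm_self (c * Real.logb 2 x + 1)]

theorem eventually_ceil_logb_bounds {c : ℝ} (hc : 0 < c) :
    ∀ᶠ n : ℕ in atTop, 0 < ⌈c * Real.logb 2 n⌉₊ ∧
      42 * ⌈c * Real.logb 2 n⌉₊ ≤ n ∧
      (2 : ℝ) ^ (7 * ⌈c * Real.logb 2 n⌉₊) ≤ (n : ℝ) ^ (10 * c) := by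
  filter_upwards [tendsto_natCast_atTop_atTop.eventually (eventually_logb_bounds hc),
    eventually_gt_atTop 0] with n ⟨hsmall, hlarge⟩ hn
  have hpos : 0 < c * Real.logb 2 n := by nlinarith
  set r := ⌈c * Real.logb 2 n⌉₊
  have hr : (r : ℝ) < c * Real.logb 2 n + 1 := Nat.ceil_lt_add_one hpos.le
  refine ⟨Nat.ceil_pos.mpr hpos, by exact_mod_cast (by linarith : 42 * (r : ℝ) ≤ n), ?_⟩
  calc (2 : ℝ) ^ (7 * r) = 2 ^ ((7 * r : ℕ) : ℝ) := (Real.rpow_natCast _ _).symm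
    _ ≤ 2 ^ (Real.logb 2 n * (10 * c)) :=
        Real.rpow_le_rpow_of_exponent_le one_le_two (by push_cast; nlinarith)
    _ = (n : ℝ) ^ (10 * c) := by
        rw [Real.rpow_mul two_pos.le, Real.rpow_logb two_pos (by norm_num) (by positivity)]

theorem Nat.div_add_one_mul_le_div_six {n r : ℕ} (h : 42 * r ≤ n) :
    (n / (7 * r) + 1) * r ≤ n / 6 := by
  have : n / (7 * r) * r ≤ n / 7 := by
    rw [← Nat.div_div_eq_div_mul]
    exact Nat.div_mul_le_self _ _
  rw [add_mul, one_mul]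
  omega

theorem cover_hamming_ball_by_subgroups
    (G : Type) [Group G] [Fintype G] [DecidableEq G]
    (hG : 2 ≤ Fintype.card G)
    (c : ℝ) (hc : 0 < c) :
    ∃ N : ℕ, ∀ n : ℕ, N ≤ n →
      ∀ H : Subgroup (Fin n → G),
        (Nat.card H : ℝ) ≤ (Fintype.card G : ℝ) ^ ((n : ℝ) / 2) →
        ∃ (m : ℕ) (Hs : Fin m → Subgroup (Fin n → G)),
          (m : ℝ) ≤ (n : ℝ) ^ (10 * c) ∧
          (∀ i, (Nat.card (Hs i) : ℝ) ≤ (Fintype.card G : ℝ) ^ ((2 * (n : ℝ)) / 3)) ∧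
          (∀ x : Fin n → G,
            (∃ h ∈ H, (hammingDist x h : ℝ) ≤ c * Real.logb 2 n) → ∃ i, x ∈ Hs i) := by
  obtain ⟨N, hN⟩ := eventually_atTop.mp (eventually_ceil_logb_bounds hc)
  refine ⟨N, fun n hn H hH => ?_⟩
  obtain ⟨hr, h42, hpow⟩ := hN n hn
  set r := ⌈c * Real.logb 2 n⌉₊
  let β : Fin n → Fin (7 * r) := fun i => ⟨i % (7 * r), Nat.mod_lt _ (by omega)⟩
  have hβ (j : Fin (7 * r)) : #{i | β i = j} ≤ n / (7 * r) + 1 := by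
    simpa [β, Fin.ext_iff] using Fin.card_filter_val_mod_eq_le n (7 * r) j
  obtain ⟨m, Hs, hm, hcard, hcover⟩ := exists_subgroups_cover_hammingBall β hβ H r
  have hexp : (((n / (7 * r) + 1) * r : ℕ) : ℝ) ≤ n / 6 :=
    (Nat.cast_le.mpr (Nat.div_add_one_mul_le_div_six h42)).trans Nat.cast_div_le
  have hq : (1 : ℝ) ≤ Fintype.card G := by exact_mod_cast one_le_two.trans hG
  set q : ℝ := (Fintype.card G : ℝ) with hq_def
  refine ⟨m, Hs, ?_, fun i => ?_, fun x ⟨h, hh, hd⟩ => hcover x ⟨h, hh, ?_⟩⟩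
  · calc (m : ℝ) ≤ 2 ^ (7 * r) := by exact_mod_cast hm.trans (by simp)
      _ ≤ (n : ℝ) ^ (10 * c) := hpow
  · calc (Nat.card (Hs i) : ℝ) ≤ Nat.card H * q ^ ((n / (7 * r) + 1) * r) := by
          rw [hq_def]
          exact_mod_cast hcard i
      _ ≤ q ^ ((n : ℝ) / 2) * q ^ ((n : ℝ) / 6) := by
        rw [← Real.rpow_natCast]
        gcongr
      _ = q ^ ((2 * (n : ℝ)) / 3) := by
        rw [← Real.rpow_add (by positivity)]
        ring_nf
  · exact_mod_cast hd.trans (Nat.le_ceil _)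
end

section
/- Let G be a finite abelian group with |G| ≥ 2 and let c > 0 be a real constant. Then for all sufficiently large n the following holds: let S be a nonempty finite multiset of elements of G^n that is symmetric and (1/n^{20c})-biased (for every nontrivial character χ of G^n, |∑_{s∈S} χ(s)| ≤ |S|/n^{20c}). Then for every m ≤ n^{10c} and every collection H_1, H_2, …, H_m of subgroups of G^n with |H_i| ≤ |G|^{2n/3} for each i, there exists an element s of S such that s ∉ H_i for every i. -/
/-!
Pulling the characters of `A ⧸ H` back to `A` and using orthogonality,
`|S ∩ H| · [A : H] = ∑_ψ ∑_{s ∈ S} ψ s`; the trivial character contributes `|S|` and each of the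
other `[A : H] - 1` characters at most `ε |S|`, so `|S ∩ H| ≤ |S| / [A : H] + ε |S|`.
A subgroup of `G^n` of order at most `|G|^(2n/3)` has index at least `|G|^(n/3)`, so `m ≤ n^(10c)`
such subgroups together contain at most `n^(10c) (|G|^(-n/3) + n^(-20c)) |S| < |S|` elements of `S`
once `n` is large.
-/

open Finset Filter Topology

namespace Multiset

variable {α β M : Type*}

lemma sum_map_finset_sum_comm [AddCommMonoid M] [Fintype β] (S : Multiset α) (f : β → α → M) :
    ∑ b, (S.map (f b)).sum = (S.map fun a => ∑ b, f b a).sum :=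
  sum_map_sum_map _ _

lemma sum_map_ite_eq_card_filter_nsmul [AddCommMonoid M] (S : Multiset α) (p : α → Prop)
    [DecidablePred p] (c : M) :
    (S.map fun a => if p a then c else 0).sum = card (S.filter p) • c := by
  induction S using Multiset.induction_on with
  | empty => simp
  | cons a T ih => by_cases h : p a <;> simp [h, ih, add_nsmul, add_comm]

lemma card_le_sum_card_filter [Fintype β] (S : Multiset α) (p : β → α → Prop)
    [∀ b, DecidablePred (p b)] (h : ∀ a ∈ S, ∃ b, p b a) :
    card S ≤ ∑ b, card (S.filter (p b)) := by
  calc card S = (S.map fun _ => 1).sum := by simp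
    _ ≤ (S.map fun a => ∑ b, if p b a then 1 else 0).sum := by
      refine sum_map_le_sum_map _ _ fun a ha => ?_
      obtain ⟨b, hb⟩ := h a ha
      calc 1 = (if p b a then 1 else 0) := (if_pos hb).symm
        _ ≤ ∑ b, if p b a then 1 else 0 :=
          Finset.single_le_sum (f := fun b => if p b a then 1 else 0) (fun _ _ => Nat.zero_le _)
            (mem_univ b)
    _ = ∑ b, card (S.filter (p b)) := by
      simp only [← sum_map_finset_sum_comm, sum_map_ite_eq_card_filter_nsmul, smul_eq_mul, mul_one]

end Multiset

section Characters

variable {A : Type*} [CommGroup A] (H : Subgroup A)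

def charOfQuotient (ψ : AddChar (Additive (A ⧸ H)) ℂ) : A →* ℂ :=
  ψ.toMonoidHom.comp (QuotientGroup.mk' H)

variable {H}

def CharSumsLE (S : Multiset A) (B : ℝ) : Prop :=
  ∀ χ : A →* ℂ, (∀ x, ‖χ x‖ = 1) → χ ≠ 1 → ‖(S.map (fun s => χ s)).sum‖ ≤ B

lemma charOfQuotient_apply (ψ : AddChar (Additive (A ⧸ H)) ℂ) (a : A) :
    charOfQuotient H ψ a = ψ (Additive.ofMul (a : A ⧸ H)) := rfl

lemma charOfQuotient_one : charOfQuotient H 1 = 1 := rfl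

lemma charOfQuotient_injective : Function.Injective (charOfQuotient H) := by
  intro ψ φ h
  ext x
  obtain ⟨a, rfl⟩ := QuotientGroup.mk_surjective (Additive.toMul x)
  exact DFunLike.congr_fun h a

lemma norm_charOfQuotient_apply [Finite A] (ψ : AddChar (Additive (A ⧸ H)) ℂ) (a : A) :
    ‖charOfQuotient H ψ a‖ = 1 :=
  AddChar.norm_apply ψ _

lemma sum_charOfQuotient_apply [Finite A] [DecidablePred (· ∈ H)] (a : A) :
    ∑ ψ, charOfQuotient H ψ a = if a ∈ H then (H.index : ℂ) else 0 := by
  classical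
  let _ := Fintype.ofFinite (A ⧸ H)
  simp only [charOfQuotient_apply, AddChar.sum_apply_eq_ite, ofMul_eq_zero,
    QuotientGroup.eq_one_iff, Fintype.card_eq_nat_card]
  rfl

theorem card_filter_mem_mul_index_le [Finite A] [DecidablePred (· ∈ H)] (S : Multiset A) (B : ℝ)
    (hbias : CharSumsLE S B) :
    (Multiset.card (S.filter (· ∈ H)) : ℝ) * H.index ≤ Multiset.card S + (H.index - 1) * B := by
  let _ := Fintype.ofFinite (A ⧸ H)
  have hcount : (Multiset.card (S.filter (· ∈ H)) : ℂ) * H.index =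
      ∑ ψ, (S.map (charOfQuotient H ψ)).sum := by
    simp only [Multiset.sum_map_finset_sum_comm, sum_charOfQuotient_apply,
      Multiset.sum_map_ite_eq_card_filter_nsmul, nsmul_eq_mul]
  calc (Multiset.card (S.filter (· ∈ H)) : ℝ) * H.index
      = ‖∑ ψ, (S.map (charOfQuotient H ψ)).sum‖ := by
        rw [← hcount]; norm_cast
    _ ≤ ∑ ψ, ‖(S.map (charOfQuotient H ψ)).sum‖ := norm_sum_le _ _
    _ = ‖(S.map (charOfQuotient H 1)).sum‖ +
          ∑ ψ ∈ univ.erase 1, ‖(S.map (charOfQuotient H ψ)).sum‖ :=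
        (add_sum_erase _ _ (mem_univ 1)).symm
    _ ≤ Multiset.card S + ∑ _ψ ∈ univ.erase (1 : AddChar (Additive (A ⧸ H)) ℂ), B := by
        refine add_le_add ?_ (sum_le_sum fun ψ hψ => ?_)
        · simp [charOfQuotient_one]
        · exact hbias _ (norm_charOfQuotient_apply ψ)
            (charOfQuotient_injective.ne (ne_of_mem_erase hψ))
    _ = Multiset.card S + (H.index - 1) * B := by
        rw [sum_const, nsmul_eq_mul, card_erase_of_mem (mem_univ _), card_univ, AddChar.card_eq,
          Nat.cast_pred Fintype.card_pos, Fintype.card_eq_nat_card]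
        rfl

theorem card_filter_mem_le [Finite A] [DecidablePred (· ∈ H)] (S : Multiset A) {B : ℝ}
    (hB : 0 ≤ B) (hbias : CharSumsLE S B) :
    (Multiset.card (S.filter (· ∈ H)) : ℝ) ≤ Multiset.card S / H.index + B := by
  have hindex : (0 : ℝ) < H.index := by
    exact_mod_cast Nat.pos_of_ne_zero H.index_ne_zero_of_finite
  rw [← sub_le_iff_le_add, le_div_iff₀ hindex]
  nlinarith [card_filter_mem_mul_index_le (H := H) S B hbias]

theorem exists_mem_forall_notMem_of_biased [Finite A] {ι : Type*} [Fintype ι] (S : Multiset A)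
    (Hs : ι → Subgroup A) {Q B : ℝ} (hQ : 0 < Q) (hB : 0 ≤ B) (hindex : ∀ i, Q ≤ (Hs i).index)
    (hbias : CharSumsLE S B)
    (hsmall : Fintype.card ι * (Multiset.card S / Q + B) < Multiset.card S) :
    ∃ s ∈ S, ∀ i, s ∉ Hs i := by
  classical
  by_contra! hcover
  refine hsmall.not_ge ?_
  calc (Multiset.card S : ℝ)
      ≤ ∑ i, (Multiset.card (S.filter (· ∈ Hs i)) : ℝ) := by
        exact_mod_cast Multiset.card_le_sum_card_filter S (fun i s => s ∈ Hs i) hcover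
    _ ≤ ∑ _i : ι, (Multiset.card S / Q + B) := sum_le_sum fun i _ =>
        (card_filter_mem_le S hB hbias).trans (by gcongr; exact hindex i)
    _ = Fintype.card ι * (Multiset.card S / Q + B) := by rw [sum_const, card_univ, nsmul_eq_mul]

end Characters

lemma rpow_div_three_le_index_of_card_le {G : Type*} [Group G] [Fintype G] {n : ℕ}
    (H : Subgroup (Fin n → G))
    (hH : (Nat.card H : ℝ) ≤ (Fintype.card G : ℝ) ^ (2 * (n : ℝ) / 3)) :
    (Fintype.card G : ℝ) ^ ((n : ℝ) / 3) ≤ H.index := by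
  have hG : (0 : ℝ) < Fintype.card G := by exact_mod_cast Fintype.card_pos
  have hH0 : (0 : ℝ) < Nat.card H := by exact_mod_cast Nat.card_pos
  have hmul : (Nat.card H : ℝ) * H.index = (Fintype.card G : ℝ) ^ (n : ℝ) := by
    rw [Real.rpow_natCast]
    exact_mod_cast H.card_mul_index.trans (by simp [Nat.card_eq_fintype_card])
  calc (Fintype.card G : ℝ) ^ ((n : ℝ) / 3)
      = (Fintype.card G : ℝ) ^ (n : ℝ) / (Fintype.card G : ℝ) ^ (2 * (n : ℝ) / 3) := by
        rw [← Real.rpow_sub hG]; ring_nf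
    _ ≤ (Fintype.card G : ℝ) ^ (n : ℝ) / Nat.card H := by gcongr
    _ = H.index := by rw [← hmul]; field_simp

lemma eventually_rpow_mul_lt_one {a b : ℝ} (ha : 0 < a) (hb : 1 < b) :
    ∀ᶠ n : ℕ in atTop, (n : ℝ) ^ a * (1 / b ^ ((n : ℝ) / 3) + 1 / (n : ℝ) ^ (2 * a)) < 1 := by
  have hexp : Tendsto (fun x : ℝ => x ^ a / b ^ (x / 3)) atTop (𝓝 0) := by
    refine (isLittleO_rpow_exp_pos_mul_atTop a
      (div_pos (Real.log_pos hb) three_pos)).tendsto_div_nhds_zero.congr fun x => ?_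
    rw [Real.rpow_def_of_pos (zero_lt_one.trans hb) (x / 3)]
    ring_nf
  have hpow : (fun x : ℝ => x ^ (-a)) =ᶠ[atTop] fun x => x ^ a / x ^ (2 * a) := by
    filter_upwards [eventually_gt_atTop 0] with x hx
    rw [← Real.rpow_sub hx]
    ring_nf
  have hlim : Tendsto (fun x : ℝ => x ^ a * (1 / b ^ (x / 3) + 1 / x ^ (2 * a))) atTop (𝓝 0) := by
    simpa [mul_add, div_eq_mul_inv] using hexp.add ((tendsto_rpow_neg_atTop ha).congr' hpow)
  exact (hlim.comp tendsto_natCast_atTop_atTop).eventually_lt_const one_pos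

theorem biased_set_escapes_union_of_subgroups_general
    (G : Type) [CommGroup G] [Fintype G]
    (hG : 2 ≤ Fintype.card G)
    (c : ℝ) (hc : 0 < c) :
    ∃ N : ℕ, ∀ n : ℕ, N ≤ n →
      ∀ S : Multiset (Fin n → G), S ≠ 0 →
        S.map (fun s => s⁻¹) = S →
        (∀ χ : (Fin n → G) →* ℂ, (∀ x, ‖χ x‖ = 1) → χ ≠ 1 →
          ‖(S.map (fun s => χ s)).sum‖ ≤ (S.card : ℝ) / (n : ℝ) ^ (20 * c)) →
        ∀ m : ℕ, (m : ℝ) ≤ (n : ℝ) ^ (10 * c) →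
          ∀ Hs : Fin m → Subgroup (Fin n → G),
            (∀ i, (Nat.card (Hs i) : ℝ) ≤ (Fintype.card G : ℝ) ^ ((2 * (n : ℝ)) / 3)) →
            ∃ s ∈ S, ∀ i, s ∉ Hs i := by
  have hG' : (1 : ℝ) < Fintype.card G := by exact_mod_cast hG
  obtain ⟨N, hN⟩ :=
    eventually_atTop.mp (eventually_rpow_mul_lt_one (by positivity : 0 < 10 * c) hG')
  refine ⟨N, fun n hn S hS _ hbias m hm Hs hHs => ?_⟩
  have hS : (0 : ℝ) < Multiset.card S := by exact_mod_cast Multiset.card_pos.mpr hS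
  have hsmall := hN n hn
  rw [show 2 * (10 * c) = 20 * c by ring] at hsmall
  refine exists_mem_forall_notMem_of_biased S Hs (by positivity) (by positivity)
    (fun i => rpow_div_three_le_index_of_card_le _ (hHs i)) hbias ?_
  calc (Fintype.card (Fin m) : ℝ) * (Multiset.card S / Fintype.card G ^ ((n : ℝ) / 3) +
        Multiset.card S / (n : ℝ) ^ (20 * c))
      = m * (1 / Fintype.card G ^ ((n : ℝ) / 3) + 1 / (n : ℝ) ^ (20 * c)) * Multiset.card S := by
        rw [Fintype.card_fin]; ring
    _ ≤ (n : ℝ) ^ (10 * c) * (1 / Fintype.card G ^ ((n : ℝ) / 3) + 1 / (n : ℝ) ^ (20 * c)) *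
        Multiset.card S := by gcongr
    _ < 1 * Multiset.card S := by gcongr
    _ = Multiset.card S := one_mul _

theorem biased_set_escapes_union_of_subgroups
    (G : Type) [CommGroup G] [Fintype G] [DecidableEq G]
    (hG : 2 ≤ Fintype.card G)
    (c : ℝ) (hc : 0 < c) :
    ∃ N : ℕ, ∀ n : ℕ, N ≤ n →
      ∀ S : Multiset (Fin n → G), S ≠ 0 →
        S.map (fun s => s⁻¹) = S →
        (∀ χ : (Fin n → G) →* ℂ, (∀ x, ‖χ x‖ = 1) → χ ≠ 1 →
          ‖(S.map (fun s => χ s)).sum‖ ≤ (S.card : ℝ) / (n : ℝ) ^ (20 * c)) →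
        ∀ m : ℕ, (m : ℝ) ≤ (n : ℝ) ^ (10 * c) →
          ∀ Hs : Fin m → Subgroup (Fin n → G),
            (∀ i, (Nat.card (Hs i) : ℝ) ≤ (Fintype.card G : ℝ) ^ ((2 * (n : ℝ)) / 3)) →
            ∃ s ∈ S, ∀ i, s ∉ Hs i :=
  biased_set_escapes_union_of_subgroups_general G hG c hc
end

section
/- For every fixed integer d ≥ 2 there is a constant C > 0 such that for every n ≥ 1 and every real ε with 0 < ε ≤ 1, there exists a nonempty finite multiset S of elements of (ZMod d)^n (the additive group of n-tuples of integers mod d) such that S is symmetric, S has cardinality (with multiplicity) at most C·(n/ε)², and S is ε-biased: for every nontrivial character χ of (ZMod d)^n, |∑_{s∈S} χ(s)| ≤ ε·|S|. -/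
/-!
Take `m > d n² / ε²` points `t : Fin m → G`, `G = (ZMod d)ⁿ`. For a nontrivial character `ψ`,
expand `|∑ ψ (t i)|^(2k)` as a sum over index maps `f : Fin 2k → Fin m`; averaged over all `t`,
a term vanishes as soon as `f` has a singleton fibre, because `∑ₓ ψ x = 0`. Maps without singleton
fibres factor through `Fin k`, so there are at most `k^(2k) mᵏ` of them. With `k = n`, the total
of these moments over the fewer than `dⁿ` nontrivial characters is smaller than `|G|ᵐ (εm)^(2k)`,
so some `t` has bias at most `ε` for all of them. Adjoining the negatives makes it symmetric
without increasing the bias, as `ψ (-x) = conj (ψ x)`.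
-/

open Finset
open scoped ComplexConjugate

section FiberCounting

variable {ι β : Type*} [Fintype ι] [DecidableEq β]

lemma two_mul_card_image_le_of_card_fiber_ne_one {f : ι → β}
    (hf : ∀ b, #{j | f j = b} ≠ 1) : 2 * #(univ.image f) ≤ Fintype.card ι := by
  calc 2 * #(univ.image f) = ∑ _b ∈ univ.image f, 2 := by rw [sum_const, smul_eq_mul, mul_comm]
    _ ≤ ∑ b ∈ univ.image f, #{j | f j = b} := sum_le_sum fun b hb => ?_
    _ = Fintype.card ι := (card_eq_sum_card_image f univ).symm
  obtain ⟨j, -, rfl⟩ := mem_image.1 hb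
  have : 0 < #{j' | f j' = f j} := card_pos.2 ⟨j, mem_filter.2 ⟨mem_univ j, rfl⟩⟩
  have := hf (f j)
  omega

lemma exists_comp_eq_of_card_image_le {k : ℕ} (hk : k ≤ Fintype.card ι) {f : ι → β}
    (hf : #(univ.image f) ≤ k) : ∃ u : ι → Fin k, ∃ g : Fin k → β, g ∘ u = f := by
  -- `hk` makes `ι` nonempty when `k > 0`; that supplies the values of `g` off the range of `e`.
  let e : univ.image f ↪ Fin k := (univ.image f).equivFin.toEmbedding.trans (Fin.castLEEmb hf)
  refine ⟨fun j => e ⟨f j, mem_image_of_mem f (mem_univ j)⟩,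
    Function.extend e Subtype.val fun i => f ((Fintype.equivFin ι).symm (Fin.castLE hk i)), ?_⟩
  funext j
  exact e.injective.extend_apply _ _ _

lemma card_filter_card_fiber_ne_one_le [DecidableEq ι] [Fintype β] {k : ℕ}
    (hk : Fintype.card ι = 2 * k) :
    #{f : ι → β | ∀ b, #{j | f j = b} ≠ 1} ≤ k ^ (2 * k) * Fintype.card β ^ k := by
  classical
  calc #{f : ι → β | ∀ b, #{j | f j = b} ≠ 1}
      ≤ #(univ.image fun p : (ι → Fin k) × (Fin k → β) => p.2 ∘ p.1) :=
        card_le_card fun f hf => ?_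
    _ ≤ Fintype.card ((ι → Fin k) × (Fin k → β)) := card_image_le.trans_eq card_univ
    _ = k ^ (2 * k) * Fintype.card β ^ k := by simp [hk]
  have := two_mul_card_image_le_of_card_fiber_ne_one (mem_filter.1 hf).2
  obtain ⟨u, g, rfl⟩ := exists_comp_eq_of_card_image_le (f := f) (k := k) (by omega) (by omega)
  exact mem_image_of_mem _ (mem_univ (u, g))

end FiberCounting

section Moment

variable {A J κ : Type*} [Fintype A] [Fintype J] [Fintype κ]

lemma ofReal_norm_sum_pow_two_mul (z : κ → ℂ) (k : ℕ) :
    ((‖∑ i, z i‖ ^ (2 * k) : ℝ) : ℂ) =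
      ∑ f : Fin k ⊕ Fin k → κ, ∏ j, Sum.elim (fun _ => z) (fun _ => conj ∘ z) j (f j) := by
  rw [Fintype.sum_equiv (Equiv.sumArrowEquivProdArrow _ _ _) _
    (fun p => (∏ j, z (p.1 j)) * ∏ j, conj (z (p.2 j))) fun f => Fintype.prod_sum_type _,
    Fintype.sum_prod_type]
  dsimp only
  rw [← sum_mul_sum, ← Fintype.sum_pow, ← Fintype.sum_pow (fun i => conj (z i)), ← map_sum,
    ← mul_pow, Complex.mul_conj, pow_mul, Complex.normSq_eq_norm_sq]
  push_cast
  rfl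

lemma sum_prod_apply_eq_zero_of_card_fiber_eq_one [DecidableEq κ] {w : J → A → ℂ}
    (hw : ∀ j, ∑ a, w j a = 0) {f : J → κ} {i : κ} (hi : #{j | f j = i} = 1) :
    ∑ t : κ → A, ∏ j, w j (t (f j)) = 0 := by
  have hfactor (t : κ → A) : ∏ j, w j (t (f j)) = ∏ i', ∏ j ∈ {j | f j = i'}, w j (t i') :=
    (prod_fiberwise univ f _).symm.trans <|
      prod_congr rfl fun i' _ => prod_congr rfl fun j hj => by rw [(mem_filter.1 hj).2]
  simp_rw [hfactor]
  rw [← Fintype.prod_sum fun i' a => ∏ j ∈ {j | f j = i'}, w j a]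
  obtain ⟨j₀, hj₀⟩ := card_eq_one.1 hi
  exact prod_eq_zero (mem_univ i) (by simp_rw [hj₀, prod_singleton, hw])

lemma norm_sum_prod_apply_le [DecidableEq κ] (w : J → A → ℂ) (hw : ∀ j a, ‖w j a‖ ≤ 1)
    (f : J → κ) :
    ‖∑ t : κ → A, ∏ j, w j (t (f j))‖ ≤ Fintype.card A ^ Fintype.card κ := by
  calc ‖∑ t : κ → A, ∏ j, w j (t (f j))‖ ≤ ∑ _t : κ → A, (1 : ℝ) :=
        norm_sum_le_of_le _ fun t _ => by
          rw [norm_prod]; exact prod_le_one (fun _ _ => norm_nonneg _) fun j _ => hw _ _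
    _ = Fintype.card A ^ Fintype.card κ := by simp

theorem sum_norm_sum_pow_le [DecidableEq κ] {v : A → ℂ} (hv : ∀ a, ‖v a‖ ≤ 1)
    (hv₀ : ∑ a, v a = 0) (k : ℕ) :
    ∑ t : κ → A, ‖∑ i, v (t i)‖ ^ (2 * k) ≤
      k ^ (2 * k) * Fintype.card κ ^ k * Fintype.card A ^ Fintype.card κ := by
  let w : Fin k ⊕ Fin k → A → ℂ := Sum.elim (fun _ => v) (fun _ => conj ∘ v)
  have hw (j a) : ‖w j a‖ ≤ 1 := by cases j <;> simp [w, hv]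
  have hw₀ (j) : ∑ a, w j a = 0 := by cases j <;> simp [w, ← map_sum, hv₀]
  have hterm (f : Fin k ⊕ Fin k → κ) : ‖∑ t : κ → A, ∏ j, w j (t (f j))‖ ≤
      if ∀ i, #{j | f j = i} ≠ 1 then (Fintype.card A ^ Fintype.card κ : ℝ) else 0 := by
    split_ifs with hf
    · exact norm_sum_prod_apply_le w hw f
    · push Not at hf
      obtain ⟨i, hi⟩ := hf
      rw [sum_prod_apply_eq_zero_of_card_fiber_eq_one hw₀ hi, norm_zero]
  calc ∑ t : κ → A, ‖∑ i, v (t i)‖ ^ (2 * k)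
      = ‖∑ f : Fin k ⊕ Fin k → κ, ∑ t : κ → A, ∏ j, w j (t (f j))‖ := by
        rw [sum_comm, ← Complex.norm_of_nonneg (sum_nonneg fun _ _ => by positivity),
          Complex.ofReal_sum]
        simp_rw [ofReal_norm_sum_pow_two_mul]
        congr! 4 with t - f - j
        cases j <;> rfl
    _ ≤ ∑ f : Fin k ⊕ Fin k → κ, ‖∑ t : κ → A, ∏ j, w j (t (f j))‖ := norm_sum_le _ _
    _ ≤ ∑ f : Fin k ⊕ Fin k → κ,
          if ∀ i, #{j | f j = i} ≠ 1 then (Fintype.card A ^ Fintype.card κ : ℝ) else 0 :=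
        sum_le_sum fun f _ => hterm f
    _ = #{f : Fin k ⊕ Fin k → κ | ∀ i, #{j | f j = i} ≠ 1} *
          Fintype.card A ^ Fintype.card κ := by
        rw [sum_ite, sum_const_zero, add_zero, sum_const, nsmul_eq_mul]
    _ ≤ k ^ (2 * k) * Fintype.card κ ^ k * Fintype.card A ^ Fintype.card κ := by
        gcongr
        exact_mod_cast card_filter_card_fiber_ne_one_le (by simp [two_mul])

end Moment

section SmallBias

variable {G : Type*} [AddCommGroup G]

def Multiset.IsBiased (ε : ℝ) (S : Multiset G) : Prop :=
  ∀ ψ : AddChar G ℂ, ψ ≠ 0 → ‖(S.map ψ).sum‖ ≤ ε * S.card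

theorem Multiset.IsBiased.add_map_neg [Finite G] {ε : ℝ} {T : Multiset G} (hT : T.IsBiased ε) :
    (T + T.map fun s => -s).IsBiased ε := by
  intro ψ hψ
  have hsum : ((T + T.map fun s => -s).map ψ).sum = (T.map ψ).sum + conj (T.map ψ).sum := by
    simp [Multiset.map_map, AddChar.map_neg_eq_conj, map_multiset_sum]
  rw [hsum, Multiset.card_add, Multiset.card_map, Nat.cast_add]
  calc ‖(T.map ψ).sum + conj (T.map ψ).sum‖ ≤ ‖(T.map ψ).sum‖ + ‖conj (T.map ψ).sum‖ :=
        norm_add_le _ _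
    _ ≤ ε * T.card + ε * T.card := by rw [RCLike.norm_conj]; linarith [hT ψ hψ]
    _ = ε * (T.card + T.card) := by ring

theorem exists_multiset_isBiased_card_eq [Fintype G] {k m : ℕ} {ε : ℝ}
    (hε : 0 ≤ ε) (h : (Fintype.card G : ℝ) * k ^ (2 * k) < (ε ^ 2 * m) ^ k) :
    ∃ T : Multiset G, T.card = m ∧ T.IsBiased ε := by
  let N (t : Fin m → G) : ℝ := ∑ ψ ∈ {ψ : AddChar G ℂ | ψ ≠ 0}, ‖∑ i, ψ (t i)‖ ^ (2 * k)
  have hm : (0 : ℝ) < (m : ℝ) ^ k := by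
    refine pos_of_mul_pos_right (a := (ε ^ 2) ^ k) ?_ (by positivity)
    rw [← mul_pow]
    exact h.trans_le' (by positivity)
  have hG : (0 : ℝ) < Fintype.card G ^ m := by positivity
  have hN : ∑ t, N t < ∑ _t : Fin m → G, (ε * m) ^ (2 * k) := calc
    ∑ t, N t = ∑ ψ ∈ {ψ : AddChar G ℂ | ψ ≠ 0}, ∑ t : Fin m → G, ‖∑ i, ψ (t i)‖ ^ (2 * k) :=
        sum_comm
    _ ≤ ∑ _ψ ∈ {ψ : AddChar G ℂ | ψ ≠ 0}, (k ^ (2 * k) * m ^ k * Fintype.card G ^ m : ℝ) :=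
        sum_le_sum fun ψ hψ => by
          simpa using sum_norm_sum_pow_le (κ := Fin m) (fun a => (ψ.norm_apply a).le)
            (AddChar.sum_eq_zero_iff_ne_zero.2 (mem_filter.1 hψ).2) k
    _ ≤ Fintype.card G * (k ^ (2 * k) * m ^ k * Fintype.card G ^ m : ℝ) := by
        rw [sum_const, nsmul_eq_mul]
        gcongr
        exact_mod_cast (card_filter_le _ _).trans (AddChar.card_addChar_le G ℂ)
    _ = (Fintype.card G * k ^ (2 * k)) * m ^ k * Fintype.card G ^ m := by ring
    _ < (ε ^ 2 * m) ^ k * m ^ k * Fintype.card G ^ m := by gcongr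
    _ = ∑ _t : Fin m → G, (ε * m) ^ (2 * k) := by simp [pow_mul]; ring
  obtain ⟨t, -, ht⟩ := exists_lt_of_sum_lt hN
  refine ⟨univ.val.map t, by simp, fun ψ hψ => ?_⟩
  have hψt : ‖∑ i, ψ (t i)‖ ^ (2 * k) < (ε * m) ^ (2 * k) :=
    (single_le_sum (f := fun ψ : AddChar G ℂ => ‖∑ i, ψ (t i)‖ ^ (2 * k))
      (fun _ _ => by positivity) (mem_filter.2 ⟨mem_univ ψ, hψ⟩)).trans_lt ht
  rw [Multiset.map_map, sum_map_val, Multiset.card_map, card_val, card_univ, Fintype.card_fin]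
  exact (lt_of_pow_lt_pow_left₀ _ (by positivity) hψt).le

end SmallBias

theorem small_bias_space_zmod
    (d : ℕ) (hd : 2 ≤ d) :
    ∃ C : ℝ, 0 < C ∧
      ∀ n : ℕ, 1 ≤ n → ∀ ε : ℝ, 0 < ε → ε ≤ 1 →
        ∃ S : Multiset (Fin n → ZMod d),
          S ≠ 0 ∧
          S.map (fun s => -s) = S ∧
          (S.card : ℝ) ≤ C * ((n : ℝ) / ε) ^ 2 ∧
          (∀ χ : AddChar (Fin n → ZMod d) ℂ,
            (∀ x, ‖χ x‖ = 1) → (∃ x, χ x ≠ 1) →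
            ‖(S.map (fun s => χ s)).sum‖ ≤ ε * (S.card : ℝ)) := by
  have : NeZero d := ⟨by omega⟩
  refine ⟨2 * (d + 1), by positivity, fun n hn ε hε hε₁ => ?_⟩
  have hq : 1 ≤ ((n : ℝ) / ε) ^ 2 :=
    one_le_pow₀ ((one_le_div hε).2 (hε₁.trans (by exact_mod_cast hn)))
  set m := ⌊d * ((n : ℝ) / ε) ^ 2⌋₊ + 1
  have hm : d * ((n : ℝ) / ε) ^ 2 < m := by simpa [m] using Nat.lt_floor_add_one _
  have hcount : (Fintype.card (Fin n → ZMod d) : ℝ) * n ^ (2 * n) < (ε ^ 2 * m) ^ n := by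
    have : (d : ℝ) * n ^ 2 < ε ^ 2 * m := by
      rw [div_pow, mul_div_assoc', div_lt_iff₀ (by positivity)] at hm
      linarith
    calc (Fintype.card (Fin n → ZMod d) : ℝ) * n ^ (2 * n) = (d * n ^ 2) ^ n := by
          simp [mul_pow, pow_mul]
      _ < (ε ^ 2 * m) ^ n := pow_lt_pow_left₀ this (by positivity) (by omega)
  obtain ⟨T, hTcard, hT⟩ := exists_multiset_isBiased_card_eq hε.le hcount
  refine ⟨T + T.map fun s => -s, ?_, by simp [Multiset.map_map, add_comm], ?_,
    fun χ _ hχ => hT.add_map_neg χ (AddChar.ne_zero_iff.2 hχ)⟩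
  · simp [← Multiset.card_eq_zero, hTcard, m]
  · have : (m : ℝ) ≤ d * ((n : ℝ) / ε) ^ 2 + 1 := by
      simpa [m] using Nat.floor_le (by positivity : 0 ≤ d * ((n : ℝ) / ε) ^ 2)
    rw [Multiset.card_add, Multiset.card_map, hTcard]
    push_cast
    nlinarith
end

section
/- For every finite abelian group G with |G| ≥ 2 there is a constant C > 0 (depending only on G) such that for every n ≥ 1 and every real ε with 0 < ε ≤ 1, there exists a nonempty finite multiset S of elements of G^n such that S is symmetric, |S| ≤ C·(n/ε)², and S is ε-biased: for every nontrivial character χ of G^n, |∑_{s∈S} χ(s)| ≤ ε·|S|. -/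
/-!
Take `S = T + T⁻¹` for a well-chosen sequence `T` of `m ≈ |G| n² / ε²` elements of `G^n`.
For a nontrivial character `χ`, expanding the `2n`-th moment of `∑ i, χ (T i)` over all
`T : Fin m → G^n` gives a sum over words of length `2n` in the letters `Fin m`; by orthogonality
a word in which some letter occurs exactly once contributes `0`, and the other words use at most
`n` letters, so the moment is at most `n^{2n} m^n |G^n|^m`. Markov's inequality and a union bound
over the at most `|G|^n` characters leave a `T` with `‖∑ i, χ (T i)‖ ≤ ε m` for every nontrivial
`χ`, and symmetrizing doubles both the size of the multiset and the bound.
-/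

open Finset ComplexConjugate

namespace MonoidHom

variable {A : Type*} [Group A]

lemma toHomUnits_injective : Function.Injective (toHomUnits : (A →* ℂ) → A →* ℂˣ) :=
  fun _ _ h => ext fun x => congrArg Units.val (DFunLike.congr_fun h x)

variable [Fintype A]

lemma norm_apply_eq_one (χ : A →* ℂ) (x : A) : ‖χ x‖ = 1 :=
  Complex.norm_eq_one_of_pow_eq_one (by rw [← map_pow, pow_card_eq_one, map_one])
    Fintype.card_ne_zero

lemma apply_inv_eq_conj (χ : A →* ℂ) (x : A) : χ x⁻¹ = conj (χ x) := by
  rw [map_inv, Complex.inv_eq_conj (χ.norm_apply_eq_one x)]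

instance : Finite (A →* ℂ) := Finite.of_injective _ toHomUnits_injective

end MonoidHom

lemma natCard_monoidHom_complex_le (A : Type*) [CommGroup A] [Fintype A] :
    Nat.card (A →* ℂ) ≤ Nat.card A := by
  have : NeZero (Monoid.exponent A : ℂ) := ⟨by exact_mod_cast Monoid.exponent_ne_zero_of_finite⟩
  obtain ⟨e⟩ := CommGroup.monoidHom_mulEquiv_of_hasEnoughRootsOfUnity A ℂ
  exact (Nat.card_le_card_of_injective _ MonoidHom.toHomUnits_injective).trans
    (Nat.card_congr e.toEquiv).le

section Words

variable {ι β : Type*} [Fintype ι] [DecidableEq β]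

lemma two_mul_card_image_le_of_fiber_ne_one {w : ι → β}
    (hw : ∀ b, #{x | w x = b} ≠ 1) : 2 * #(univ.image w) ≤ Fintype.card ι := by
  rw [← card_univ, card_eq_sum_card_image w, mul_comm, ← smul_eq_mul, ← sum_const]
  refine sum_le_sum fun b hb => ?_
  obtain ⟨x, -, rfl⟩ := mem_image.mp hb
  have : 0 < #{y | w y = w x} := card_pos.mpr ⟨x, by simp⟩
  have := hw (w x)
  omega

lemma card_filter_card_image_le [DecidableEq ι] [Fintype β] [Nonempty β] (k : ℕ) :
    #{w : ι → β | #(univ.image w) ≤ k} ≤ k ^ Fintype.card ι * Fintype.card β ^ k := by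
  calc #{w : ι → β | #(univ.image w) ≤ k}
      ≤ #(univ.image fun p : (ι → Fin k) × (Fin k → β) => p.2 ∘ p.1) := by
        refine card_le_card fun w hw => ?_
        set l := (univ.image w).toList
        have hl : l.length ≤ k := by simpa [l] using (mem_filter.mp hw).2
        have hcover : ∀ x, ∃ j : Fin k, l.getD j (Classical.arbitrary β) = w x := by
          intro x
          obtain ⟨j, hj, hjx⟩ := List.mem_iff_getElem.mp (by simp [l] : w x ∈ l)
          exact ⟨⟨j, hj.trans_le hl⟩, by rw [List.getD_eq_getElem _ _ hj, hjx]⟩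
        choose F hF using hcover
        exact mem_image.mpr ⟨(F, fun j => l.getD j (Classical.arbitrary β)), mem_univ _,
          funext hF⟩
    _ ≤ _ := card_image_le.trans (by simp)

end Words

section Moment

variable {A ι β : Type*} [CommGroup A]

def wordProd [Fintype ι] (w : ι → β) (σ : ι → ℤ) : (β → A) →* A :=
  MonoidHom.mk' (fun f => ∏ x, f (w x) ^ σ x) fun f g => by
    simp only [Pi.mul_apply, mul_zpow, prod_mul_distrib]

lemma wordProd_mulSingle [Fintype ι] [DecidableEq β] {w : ι → β} (σ : ι → ℤ) {b : β} {x₀ : ι}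
    (hb : ({x | w x = b} : Finset ι) = {x₀}) (g : A) :
    wordProd w σ (Pi.mulSingle b g) = g ^ σ x₀ := by
  have hfiber : ∀ x, w x = b ↔ x = x₀ := fun x => by simpa using congrArg (x ∈ ·) hb
  refine (prod_eq_single x₀ (fun x _ hx => ?_) (by simp)).trans ?_
  · rw [Pi.mulSingle_eq_of_ne (mt (hfiber x).mp hx), one_zpow]
  · rw [(hfiber x₀).mpr rfl, Pi.mulSingle_eq_same]

lemma MonoidHom.comp_wordProd_ne_one [Fintype ι] [DecidableEq β] {χ : A →* ℂ} (hχ : χ ≠ 1)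
    {w : ι → β} {σ : ι → ℤ} (hσ : ∀ x, IsUnit (σ x)) {b : β} (hb : #{x | w x = b} = 1) :
    χ.comp (wordProd w σ) ≠ 1 := by
  obtain ⟨g, hg⟩ : ∃ g, χ g ≠ 1 := by
    by_contra! h
    exact hχ (MonoidHom.ext h)
  obtain ⟨x₀, hx₀⟩ := card_eq_one.mp hb
  intro h
  have hχg : χ g ^ σ x₀ = 1 := by
    simpa [wordProd_mulSingle σ hx₀, map_zpow] using DFunLike.congr_fun h (Pi.mulSingle b g)
  apply hg
  rw [← zpow_one (χ g), ← Int.isUnit_mul_self (hσ x₀), zpow_mul, hχg, one_zpow]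

variable [Fintype A] [Fintype β]

lemma norm_sum_pow_eq_sum_wordProd (χ : A →* ℂ) (f : β → A) (k : ℕ) :
    ((‖∑ i, χ (f i)‖ ^ (2 * k) : ℝ) : ℂ)
      = ∑ w : Fin k ⊕ Fin k → β, χ (wordProd w (Sum.elim 1 (-1)) f) := by
  set z := ∑ i, χ (f i)
  have hconj : conj z = ∑ i, χ (f i)⁻¹ := by simp [z, map_sum, χ.apply_inv_eq_conj]
  calc ((‖z‖ ^ (2 * k) : ℝ) : ℂ) = z ^ k * conj z ^ k := by
        rw [← mul_pow, Complex.mul_conj, Complex.normSq_eq_norm_sq, pow_mul]; push_cast; rfl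
    _ = ∑ F : Fin k → β, ∑ K : Fin k → β, (∏ a, χ (f (F a))) * ∏ a, χ (f (K a))⁻¹ := by
        rw [hconj, Fintype.sum_pow, Fintype.sum_pow, sum_mul_sum]
    _ = _ := by
        rw [← Fintype.sum_prod_type', ← (Equiv.sumArrowEquivProdArrow _ _ _).sum_comp]
        simp [wordProd, Fintype.prod_sum_type, map_prod]

lemma sum_norm_sum_pow_le_s9 [DecidableEq β] [Nonempty β] {χ : A →* ℂ} (hχ : χ ≠ 1) (k : ℕ) :
    ∑ f : β → A, ‖∑ i, χ (f i)‖ ^ (2 * k)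
      ≤ k ^ (2 * k) * Fintype.card β ^ k * Fintype.card A ^ Fintype.card β := by
  set σ : Fin k ⊕ Fin k → ℤ := Sum.elim 1 (-1)
  set good : Finset (Fin k ⊕ Fin k → β) := {w | ∀ b, #{x | w x = b} ≠ 1}
  have hbad : ∀ w ∉ good, ∑ f, χ (wordProd w σ f) = 0 := by
    intro w hw
    obtain ⟨b, hb⟩ : ∃ b, #{x | w x = b} = 1 := by simpa [good] using hw
    have hσ : ∀ x, IsUnit (σ x) := by rintro (x | x) <;> simp [σ]
    exact sum_hom_units_eq_zero _ (MonoidHom.comp_wordProd_ne_one hχ hσ hb)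
  have hterm : ∀ w, ‖∑ f : β → A, χ (wordProd w σ f)‖ ≤ Fintype.card A ^ Fintype.card β :=
    fun w => (norm_sum_le _ _).trans (by simp [χ.norm_apply_eq_one])
  have hgood : #good ≤ k ^ (2 * k) * Fintype.card β ^ k := by
    refine (card_le_card fun w hw => ?_).trans
      (by simpa [two_mul] using card_filter_card_image_le (ι := Fin k ⊕ Fin k) (β := β) k)
    have := two_mul_card_image_le_of_fiber_ne_one (mem_filter.mp hw).2
    simp only [Fintype.card_sum, Fintype.card_fin] at this
    exact mem_filter.mpr ⟨mem_univ _, by omega⟩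
  calc ∑ f : β → A, ‖∑ i, χ (f i)‖ ^ (2 * k)
      = ‖∑ f : β → A, ((‖∑ i, χ (f i)‖ ^ (2 * k) : ℝ) : ℂ)‖ := by
        rw [← Complex.ofReal_sum, Complex.norm_real, Real.norm_of_nonneg (by positivity)]
    _ = ‖∑ w ∈ good, ∑ f, χ (wordProd w σ f)‖ := by
        simp_rw [norm_sum_pow_eq_sum_wordProd]
        rw [sum_comm, sum_subset (subset_univ good) fun w _ hw => hbad w hw]
    _ ≤ #good * Fintype.card A ^ Fintype.card β := by
        simpa using (norm_sum_le _ _).trans (sum_le_card_nsmul good _ _ fun w _ => hterm w)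
    _ ≤ _ := by gcongr; exact_mod_cast hgood

lemma exists_forall_norm_sum_le [DecidableEq β] [Nonempty β] {k : ℕ} (hk : k ≠ 0) {δ : ℝ}
    (hδ : 0 ≤ δ) (h : Fintype.card A * (k ^ (2 * k) * Fintype.card β ^ k) < δ ^ (2 * k)) :
    ∃ f : β → A, ∀ χ : A →* ℂ, χ ≠ 1 → ‖∑ i, χ (f i)‖ ≤ δ := by
  classical
  have := Fintype.ofFinite (A →* ℂ)
  set nontrivial : Finset (A →* ℂ) := {χ | χ ≠ 1}
  have hcard : #nontrivial ≤ Fintype.card A := by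
    refine (card_filter_le _ _).trans ?_
    simpa only [card_univ, Nat.card_eq_fintype_card] using natCard_monoidHom_complex_le A
  have hsum : ∑ χ ∈ nontrivial, ∑ f : β → A, ‖∑ i, χ (f i)‖ ^ (2 * k)
      < ∑ _f : β → A, δ ^ (2 * k) :=
    calc _ ≤ ∑ _χ ∈ nontrivial,
          (k ^ (2 * k) * Fintype.card β ^ k * Fintype.card A ^ Fintype.card β : ℝ) :=
          sum_le_sum fun χ hχ => sum_norm_sum_pow_le_s9 (mem_filter.mp hχ).2 k
      _ ≤ Fintype.card A * (k ^ (2 * k) * Fintype.card β ^ k)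
            * Fintype.card A ^ Fintype.card β := by
          rw [sum_const, nsmul_eq_mul, ← mul_assoc]
          gcongr
      _ < δ ^ (2 * k) * Fintype.card A ^ Fintype.card β := by gcongr
      _ = _ := by simp [mul_comm]
  rw [sum_comm] at hsum
  obtain ⟨f, -, hf⟩ := exists_lt_of_sum_lt hsum
  refine ⟨f, fun χ hχ => ?_⟩
  rw [← pow_le_pow_iff_left₀ (norm_nonneg _) hδ (by omega : 2 * k ≠ 0)]
  have hmem : χ ∈ nontrivial := by simpa [nontrivial] using hχ
  exact (single_le_sum (f := fun χ : A →* ℂ => ‖∑ i, χ (f i)‖ ^ (2 * k))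
    (fun _ _ => by positivity) hmem).trans hf.le

end Moment

lemma exists_pi_forall_norm_sum_le_mul (G : Type*) [CommGroup G] [Fintype G] {n m : ℕ}
    (hn : n ≠ 0) {ε : ℝ} (hε : 0 < ε) (hm : Fintype.card G * ((n : ℝ) / ε) ^ 2 < m) :
    ∃ f : Fin m → Fin n → G, ∀ χ : (Fin n → G) →* ℂ, χ ≠ 1 → ‖∑ i, χ (f i)‖ ≤ ε * m := by
  have hm₀ : (0 : ℝ) < m := hm.trans_le' (by positivity)
  have : Nonempty (Fin m) := Fin.pos_iff_nonempty.mp (by exact_mod_cast hm₀)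
  refine exists_forall_norm_sum_le hn (by positivity) ?_
  rw [div_pow, mul_div_assoc', div_lt_iff₀ (by positivity)] at hm
  rw [Fintype.card_fun, Fintype.card_fin, Fintype.card_fin]
  push_cast
  calc (Fintype.card G : ℝ) ^ n * (n ^ (2 * n) * m ^ n) = (Fintype.card G * n ^ 2 * m) ^ n := by
        ring
    _ < (m * ε ^ 2 * m) ^ n := by gcongr
    _ = (ε * m) ^ (2 * n) := by ring

namespace Multiset

variable {α : Type*}

def symmetrize [Inv α] (T : Multiset α) : Multiset α := T + T.map (·⁻¹)

lemma card_symmetrize [Inv α] (T : Multiset α) : (symmetrize T).card = 2 * T.card := by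
  rw [symmetrize, card_add, card_map, two_mul]

lemma map_inv_symmetrize [InvolutiveInv α] (T : Multiset α) :
    (symmetrize T).map (·⁻¹) = symmetrize T := by
  rw [symmetrize, map_add, map_map, inv_involutive.comp_self, map_id, add_comm]

lemma norm_sum_map_symmetrize_le {A : Type*} [Group A] [Fintype A] (χ : A →* ℂ)
    (T : Multiset A) : ‖((symmetrize T).map χ).sum‖ ≤ 2 * ‖(T.map χ).sum‖ := by
  have hconj : ((T.map (·⁻¹)).map χ).sum = conj (T.map χ).sum := by
    rw [map_map, map_multiset_sum, map_map]
    exact congrArg sum (map_congr rfl fun x _ => χ.apply_inv_eq_conj x)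
  rw [symmetrize, map_add, sum_add, hconj, two_mul]
  exact (norm_add_le _ _).trans_eq (by rw [Complex.norm_conj])

end Multiset

theorem small_bias_space_abelian_group_general
    (G : Type) [CommGroup G] [Fintype G] :
    ∃ C : ℝ, 0 < C ∧
      ∀ n : ℕ, 1 ≤ n → ∀ ε : ℝ, 0 < ε → ε ≤ 1 →
        ∃ S : Multiset (Fin n → G),
          S ≠ 0 ∧
          S.map (fun s => s⁻¹) = S ∧
          (S.card : ℝ) ≤ C * ((n : ℝ) / ε) ^ 2 ∧
          (∀ χ : (Fin n → G) →* ℂ,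
            (∀ x, ‖χ x‖ = 1) → χ ≠ 1 →
            ‖(S.map (fun s => χ s)).sum‖ ≤ ε * (S.card : ℝ)) := by
  refine ⟨2 * (Fintype.card G + 1), by positivity, fun n hn ε hε hε1 => ?_⟩
  set x := Fintype.card G * ((n : ℝ) / ε) ^ 2
  set m := ⌊x⌋₊ + 1
  have hm : x < m := by exact_mod_cast Nat.lt_floor_add_one x
  obtain ⟨f, hf⟩ := exists_pi_forall_norm_sum_le_mul G (Nat.one_le_iff_ne_zero.mp hn) hε hm
  set T : Multiset (Fin n → G) := univ.val.map f
  have hS : ((Multiset.symmetrize T).card : ℝ) = 2 * m := by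
    rw [Multiset.card_symmetrize, Multiset.card_map, card_val, card_univ, Fintype.card_fin]
    push_cast; rfl
  refine ⟨T.symmetrize, ?_, T.map_inv_symmetrize, ?_, fun χ _ hχ => ?_⟩
  · rw [← Multiset.card_pos, ← Nat.cast_pos (α := ℝ), hS]
    positivity
  · have hnε : 1 ≤ ((n : ℝ) / ε) ^ 2 :=
      one_le_pow₀ ((one_le_div hε).mpr (hε1.trans (by exact_mod_cast hn)))
    have hx : (⌊x⌋₊ : ℝ) ≤ x := Nat.floor_le (by positivity)
    rw [hS]
    push_cast [m]
    linarith
  · calc ‖((T.symmetrize).map χ).sum‖ ≤ 2 * ‖(T.map χ).sum‖ := T.norm_sum_map_symmetrize_le χ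
      _ ≤ 2 * (ε * m) := by
        rw [Multiset.map_map]
        gcongr
        exact hf χ hχ
      _ = _ := by rw [hS]; ring

theorem small_bias_space_abelian_group
    (G : Type) [CommGroup G] [Fintype G] (hG : 2 ≤ Fintype.card G) :
    ∃ C : ℝ, 0 < C ∧
      ∀ n : ℕ, 1 ≤ n → ∀ ε : ℝ, 0 < ε → ε ≤ 1 →
        ∃ S : Multiset (Fin n → G),
          S ≠ 0 ∧
          S.map (fun s => s⁻¹) = S ∧
          (S.card : ℝ) ≤ C * ((n : ℝ) / ε) ^ 2 ∧
          (∀ χ : (Fin n → G) →* ℂ,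
            (∀ x, ‖χ x‖ = 1) → χ ≠ 1 →
            ‖(S.map (fun s => χ s)).sum‖ ≤ ε * (S.card : ℝ)) :=
  small_bias_space_abelian_group_general G
end

section
/- For every real constant c > 0 and all sufficiently large n, there exists a nonempty finite symmetric multiset S of elements of 𝔽₂^n and a linear subspace L of 𝔽₂^n of dimension ⌊n/2⌋ such that: (a) S is (1/n^c)-biased, i.e., for every nonzero a ∈ 𝔽₂^n, |∑_{s∈S} (-1)^{⟨a,s⟩}| ≤ |S|/n^c (the sum counted with multiplicity, where ⟨a,s⟩ = ∑_i a_i·s_i over 𝔽₂); and (b) every element s of S satisfies Δ(s,L) ≤ 20c·log₂ n, i.e., there exists u ∈ L with Hamming distance Δ(s,u) ≤ 20c·log₂ n. -/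
/-!
Take a binary linear code `C` of dimension `⌈n/2⌉` whose nonzero words are all balanced, i.e. have
at least `n/32` zeros and at least `n/32` ones. It exists because for a uniformly random generator
matrix every fixed nonzero combination of its rows is a uniform word, while unbalanced words are
rare by the Chernoff-type estimate `#{v | v has ≤ m ones} · 63^(n-m) ≤ ∑ᵥ 63^#(zeros of v) = 64^n`;
a union bound over the `2^⌈n/2⌉` combinations leaves a good matrix.

Put `L = C^⊥`, of dimension `⌊n/2⌋`, and let `S` be the multiset of endpoints
`u + e_{f 1} + ⋯ + e_{f w}` of all `w`-step walks along coordinate directions started in `L`, where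
`w = ⌊20 c log₂ n⌋`; each of them is within Hamming distance `w` of `L`. The character `χₐ` sums
over `S` to `(∑_{u ∈ L} χₐ u) · (∑ᵢ (-1)^{aᵢ})^w`. The first factor vanishes unless `a ∈ L^⊥ = C`,
and then `a` is balanced, so the second factor is at most `(15n/16)^w ≤ n^w / n^c`.
-/

open Finset Matrix

theorem AddChar.map_sum_eq_prod {A M ι : Type*} [AddCommMonoid A] [CommMonoid M]
    (ψ : AddChar A M) (s : Finset ι) (f : ι → A) : ψ (∑ i ∈ s, f i) = ∏ i ∈ s, ψ (f i) := by
  induction s using Finset.cons_induction with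
  | empty => simp
  | cons i s hi ih => rw [sum_cons, prod_cons, ψ.map_add_eq_mul, ih]

theorem AddChar.sum_add_sum_fin_eq_mul_pow {A R U I : Type*} [AddCommMonoid A] [CommSemiring R]
    [Fintype U] [Fintype I] (ψ : AddChar A R) (p : U → A) (e : I → A) (w : ℕ) :
    ∑ q : U × (Fin w → I), ψ (p q.1 + ∑ j, e (q.2 j)) = (∑ u, ψ (p u)) * (∑ i, ψ (e i)) ^ w := by
  simp_rw [Fintype.sum_prod_type, ψ.map_add_eq_mul, ψ.map_sum_eq_prod, Fintype.sum_pow,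
    Finset.sum_mul_sum]

theorem AddMonoidHom.card_filter_mem_mul_card {G H : Type*} [AddGroup G] [Fintype G] [AddGroup H]
    [Fintype H] [DecidableEq H] (f : G →+ H) (hf : Function.Surjective f) (B : Finset H) :
    #{g | f g ∈ B} * Fintype.card H = #B * Fintype.card G := by
  have hfiber (B : Finset H) : #{g | f g ∈ B} = #B * #{g | f g = 0} := by
    rw [← sum_card_fiberwise_eq_card_filter, ← smul_eq_mul, ← sum_const]
    exact sum_congr rfl fun h _ => AddMonoidHom.card_fiber_eq_of_mem_range f (hf h) (hf 0)
  have hG := hfiber univ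
  simp only [mem_univ, filter_true, card_univ] at hG
  rw [hfiber, hG]
  ring

theorem surjective_sum_smul {K V ι : Type*} [DivisionRing K] [AddCommGroup V] [Module K V]
    [Fintype ι] {x : ι → K} (hx : x ≠ 0) :
    Function.Surjective fun G : ι → V => ∑ j, x j • G j := by
  classical
  obtain ⟨j, hj⟩ := Function.ne_iff.1 hx
  intro v
  refine ⟨Pi.single j ((x j)⁻¹ • v), ?_⟩
  simp [Pi.single_apply, smul_smul, mul_inv_cancel₀ hj]

theorem exists_forall_sum_smul_notMem {K V ι : Type*} [Field K] [Fintype K] [AddCommGroup V]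
    [Module K V] [Fintype V] [Fintype ι] {B : Finset V}
    (hB : Fintype.card K ^ Fintype.card ι * #B < Fintype.card V) :
    ∃ g : ι → V, ∀ x : ι → K, x ≠ 0 → ∑ j, x j • g j ∉ B := by
  classical
  by_contra! hcover
  let Φ (x : ι → K) : (ι → V) →+ V :=
    AddMonoidHom.mk' (fun G => ∑ j, x j • G j) fun G H => by simp [smul_add, sum_add_distrib]
  have hsub : (univ : Finset (ι → V)) ⊆ (univ.erase 0).biUnion fun x => {G | Φ x G ∈ B} := by
    intro G _
    obtain ⟨x, hx, hG⟩ := hcover G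
    simpa [Φ] using ⟨x, hx, hG⟩
  have hcard : Fintype.card V * Fintype.card (ι → V)
      ≤ (Fintype.card K ^ Fintype.card ι - 1) * #B * Fintype.card (ι → V) := by
    calc Fintype.card V * Fintype.card (ι → V)
        ≤ (∑ x ∈ (univ : Finset (ι → K)).erase 0, #{G | Φ x G ∈ B}) * Fintype.card V := by
          rw [mul_comm]
          gcongr
          exact (card_le_card hsub).trans card_biUnion_le
      _ = ∑ x ∈ (univ : Finset (ι → K)).erase 0, #B * Fintype.card (ι → V) := by
          rw [sum_mul]
          refine sum_congr rfl fun x hx => (Φ x).card_filter_mem_mul_card ?_ B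
          exact surjective_sum_smul (ne_of_mem_erase hx)
      _ = _ := by
          rw [sum_const, card_erase_of_mem (mem_univ _), card_univ, Fintype.card_fun, smul_eq_mul,
            mul_assoc]
  have hle := Nat.le_of_mul_le_mul_right hcard Fintype.card_pos
  exact hB.not_ge (hle.trans (Nat.mul_le_mul_right _ (Nat.sub_le _ 1)))

section DotProductOrthogonal

variable {K ι : Type*} [Field K] [Fintype ι]

theorem dotProductBilin_nondegenerate :
    (dotProductBilin K K : LinearMap.BilinForm K (ι → K)).Nondegenerate :=
  ⟨fun x hx => dotProduct_eq_zero x hx,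
    fun y hy => dotProduct_eq_zero y fun x => (dotProduct_comm y x).trans (hy x)⟩

theorem finrank_orthogonal_dotProductBilin (C : Submodule K (ι → K)) :
    Module.finrank K (LinearMap.BilinForm.orthogonal (dotProductBilin K K) C)
      = Fintype.card ι - Module.finrank K C := by
  rw [LinearMap.BilinForm.finrank_orthogonal dotProductBilin_nondegenerate,
    Module.finrank_fintype_fun_eq_card]

theorem exists_mem_orthogonal_dotProduct_ne_zero {C : Submodule K (ι → K)} {a : ι → K}
    (ha : a ∉ C) :
    ∃ u ∈ LinearMap.BilinForm.orthogonal (dotProductBilin K K) C, a ⬝ᵥ u ≠ 0 := by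
  by_contra! h
  refine ha ?_
  rw [← LinearMap.BilinForm.orthogonal_orthogonal dotProductBilin_nondegenerate
    (fun x y hxy => (dotProduct_comm y x).trans hxy) C]
  exact fun u hu => (dotProduct_comm u a).trans (h u hu)

end DotProductOrthogonal

theorem ZMod.eq_one_iff_ne_zero_mod_two (z : ZMod 2) : z = 1 ↔ z ≠ 0 := by
  revert z
  decide

section Balanced

variable {ι β : Type*} [Fintype ι]

theorem card_filter_card_filter_eq_le_mul_pow_le [DecidableEq ι] [Fintype β] [DecidableEq β]
    (x : β) {b : ℕ} (hb : 1 ≤ b) (m : ℕ) :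
    #{v : ι → β | #{i | v i = x} ≤ m} * b ^ (Fintype.card ι - m)
      ≤ (1 + b * (Fintype.card β - 1)) ^ Fintype.card ι := by
  have hweight (v : ι → β) : ∏ i, (if v i = x then 1 else b) = b ^ #{i | v i ≠ x} := by
    rw [prod_ite, prod_const_one, one_mul, prod_const]
  have hletter : ∑ y : β, (if y = x then 1 else b) = 1 + b * (Fintype.card β - 1) := by
    rw [sum_ite, sum_const, sum_const, filter_eq', filter_ne', if_pos (mem_univ x),
      card_singleton, card_erase_of_mem (mem_univ x), card_univ]
    simp [mul_comm]
  calc #{v : ι → β | #{i | v i = x} ≤ m} * b ^ (Fintype.card ι - m)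
      = ∑ v ∈ {v : ι → β | #{i | v i = x} ≤ m}, b ^ (Fintype.card ι - m) := by
        rw [sum_const, smul_eq_mul]
    _ ≤ ∑ v ∈ {v : ι → β | #{i | v i = x} ≤ m}, b ^ #{i | v i ≠ x} := by
        refine sum_le_sum fun v hv => Nat.pow_le_pow_right hb ?_
        have : #{i | v i = x} + #{i | v i ≠ x} = Fintype.card ι :=
          card_filter_add_card_filter_not _
        have := (mem_filter.1 hv).2
        omega
    _ ≤ ∑ v : ι → β, ∏ i, (if v i = x then 1 else b) := by
        simp_rw [hweight]
        exact sum_le_sum_of_subset (subset_univ _)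
    _ = (1 + b * (Fintype.card β - 1)) ^ Fintype.card ι := by
        rw [← Fintype.prod_sum fun (_ : ι) (y : β) => if y = x then 1 else b, hletter, prod_const,
          card_univ]

def IsBalanced [DecidableEq β] (v : ι → β) : Prop :=
  ∀ x, Fintype.card ι ≤ 32 * #{i | v i = x}

instance [Fintype β] [DecidableEq β] : DecidablePred (IsBalanced : (ι → β) → Prop) :=
  fun v => by unfold IsBalanced; infer_instance

theorem not_isBalanced_zero [Nonempty ι] : ¬IsBalanced (0 : ι → ZMod 2) := by
  intro h
  simpa using h 1

theorem card_filter_not_isBalanced_mul_le [DecidableEq ι] :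
    #{v : ι → ZMod 2 | ¬IsBalanced v} * 63 ^ (Fintype.card ι - Fintype.card ι / 32)
      ≤ 2 * 64 ^ Fintype.card ι := by
  set n := Fintype.card ι
  have hsub : ({v | ¬IsBalanced v} : Finset (ι → ZMod 2))
      ⊆ univ.biUnion fun x : ZMod 2 => {v | #{i | v i = x} ≤ n / 32} := by
    intro v hv
    simp only [IsBalanced, not_forall, not_le, mem_filter, mem_univ, true_and] at hv
    obtain ⟨x, hx⟩ := hv
    simp only [mem_biUnion, mem_univ, mem_filter, true_and]
    exact ⟨x, by omega⟩
  calc #{v : ι → ZMod 2 | ¬IsBalanced v} * 63 ^ (n - n / 32)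
      ≤ (∑ x : ZMod 2, #{v : ι → ZMod 2 | #{i | v i = x} ≤ n / 32}) * 63 ^ (n - n / 32) := by
        gcongr
        exact (card_le_card hsub).trans card_biUnion_le
    _ ≤ ∑ x : ZMod 2, 64 ^ n := by
        rw [sum_mul]
        exact sum_le_sum fun x _ => card_filter_card_filter_eq_le_mul_pow_le x (by norm_num) _
    _ = 2 * 64 ^ n := by simp

theorem card_filter_eq_zero_add_card_filter_eq_one (v : ι → ZMod 2) :
    #{i | v i = 0} + #{i | v i = 1} = Fintype.card ι := by
  simp_rw [ZMod.eq_one_iff_ne_zero_mod_two]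
  exact card_filter_add_card_filter_not _

theorem sum_neg_one_pow_val_eq (v : ι → ZMod 2) :
    ∑ i, (-1 : ℝ) ^ (v i).val = #{i | v i = 0} - #{i | v i = 1} := by
  have hsign : ∀ i, (-1 : ℝ) ^ (v i).val = if v i = 0 then 1 else -1 := fun i => by
    rcases (by decide : ∀ z : ZMod 2, z = 0 ∨ z = 1) (v i) with h | h <;> simp [h, ZMod.val_one]
  simp [hsign, Finset.sum_ite, ZMod.eq_one_iff_ne_zero_mod_two, sub_eq_add_neg]

theorem abs_sum_neg_one_pow_val_le_of_isBalanced {v : ι → ZMod 2} (hv : IsBalanced v) :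
    |∑ i, (-1 : ℝ) ^ (v i).val| ≤ 15 / 16 * Fintype.card ι := by
  have h0 : (Fintype.card ι : ℝ) ≤ 32 * #{i | v i = 0} := by exact_mod_cast hv 0
  have h1 : (Fintype.card ι : ℝ) ≤ 32 * #{i | v i = 1} := by exact_mod_cast hv 1
  have htotal : (#{i | v i = 0} : ℝ) + #{i | v i = 1} = Fintype.card ι := by
    exact_mod_cast card_filter_eq_zero_add_card_filter_eq_one v
  rw [sum_neg_one_pow_val_eq, abs_le]
  constructor <;> linarith

end Balanced

theorem two_pow_mul_sixtyFour_pow_lt {n : ℕ} (hn : 1000 ≤ n) :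
    2 ^ ((n + 1) / 2 + 1) * 64 ^ n < 2 ^ n * 63 ^ (n - n / 32) := by
  set m := n - n / 32
  have h63 : 2 ^ (59 * (m / 10)) ≤ 63 ^ m :=
    calc 2 ^ (59 * (m / 10)) = (2 ^ 59) ^ (m / 10) := pow_mul ..
      _ ≤ (63 ^ 10) ^ (m / 10) := Nat.pow_le_pow_left (by norm_num) _
      _ = 63 ^ (10 * (m / 10)) := (pow_mul ..).symm
      _ ≤ 63 ^ m := Nat.pow_le_pow_right (by norm_num) (Nat.mul_div_le m 10)
  calc 2 ^ ((n + 1) / 2 + 1) * 64 ^ n = 2 ^ ((n + 1) / 2 + 1 + 6 * n) := by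
        rw [show (64 : ℕ) = 2 ^ 6 by norm_num, ← pow_mul, ← pow_add]
    _ < 2 ^ (n + 59 * (m / 10)) := Nat.pow_lt_pow_right one_lt_two (by omega)
    _ ≤ 2 ^ n * 63 ^ m := by rw [pow_add]; exact Nat.mul_le_mul_left _ h63

theorem exists_submodule_finrank_forall_isBalanced {n : ℕ} (hn : 1000 ≤ n) :
    ∃ C : Submodule (ZMod 2) (Fin n → ZMod 2),
      Module.finrank (ZMod 2) C = (n + 1) / 2 ∧ ∀ a ∈ C, a ≠ 0 → IsBalanced a := by
  set k := (n + 1) / 2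
  have hbad : 2 ^ k * #{v : Fin n → ZMod 2 | ¬IsBalanced v} < 2 ^ n := by
    have hcount := card_filter_not_isBalanced_mul_le (ι := Fin n)
    rw [Fintype.card_fin] at hcount
    refine Nat.lt_of_mul_lt_mul_right (a := 63 ^ (n - n / 32)) ?_
    calc 2 ^ k * #{v : Fin n → ZMod 2 | ¬IsBalanced v} * 63 ^ (n - n / 32)
        ≤ 2 ^ k * (2 * 64 ^ n) := by rw [mul_assoc]; exact Nat.mul_le_mul_left _ hcount
      _ = 2 ^ (k + 1) * 64 ^ n := by ring
      _ < 2 ^ n * 63 ^ (n - n / 32) := two_pow_mul_sixtyFour_pow_lt hn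
  obtain ⟨g, hg⟩ := exists_forall_sum_smul_notMem (K := ZMod 2) (ι := Fin k)
    (B := {v : Fin n → ZMod 2 | ¬IsBalanced v}) (by simpa [ZMod.card, Fintype.card_fun] using hbad)
  simp only [mem_filter, mem_univ, true_and, not_not] at hg
  have : Nonempty (Fin n) := ⟨⟨0, by omega⟩⟩
  have hli : LinearIndependent (ZMod 2) g := Fintype.linearIndependent_iff.2 fun x hx => by
    by_contra! hne
    exact not_isBalanced_zero (hx ▸ hg x (Function.ne_iff.2 hne))
  refine ⟨Submodule.span (ZMod 2) (Set.range g),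
    by rw [finrank_span_eq_card hli, Fintype.card_fin], fun a ha ha0 => ?_⟩
  obtain ⟨x, rfl⟩ := (Submodule.mem_span_range_iff_exists_fun (ZMod 2)).1 ha
  exact hg x (by rintro rfl; simp at ha0)

theorem exists_finrank_eq_half_forall_orthogonal_isBalanced {n : ℕ} (hn : 1000 ≤ n) :
    ∃ L : Submodule (ZMod 2) (Fin n → ZMod 2), Module.finrank (ZMod 2) L = n / 2 ∧
      ∀ a ≠ 0, (∀ u ∈ L, a ⬝ᵥ u = 0) → IsBalanced a := by
  obtain ⟨C, hC, hbal⟩ := exists_submodule_finrank_forall_isBalanced hn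
  refine ⟨LinearMap.BilinForm.orthogonal (dotProductBilin _ _) C, ?_, fun a ha horth => ?_⟩
  · rw [finrank_orthogonal_dotProductBilin, hC, Fintype.card_fin]
    omega
  · by_cases haC : a ∈ C
    · exact hbal a haC ha
    · obtain ⟨u, hu, hau⟩ := exists_mem_orthogonal_dotProduct_ne_zero haC
      exact absurd (horth u hu) hau

section SignCharacter

variable {ι : Type*} [Fintype ι]

noncomputable def signChar (a : ι → ZMod 2) : AddChar (ι → ZMod 2) ℝ :=
  (AddChar.zmodChar 2 (by norm_num : (-1 : ℝ) ^ 2 = 1)).compAddMonoidHom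
    (dotProductBilin (ZMod 2) (ZMod 2) a).toAddMonoidHom

theorem signChar_apply (a s : ι → ZMod 2) : signChar a s = (-1) ^ (a ⬝ᵥ s).val := rfl

theorem abs_signChar (a s : ι → ZMod 2) : |signChar a s| = 1 := by
  simp [signChar_apply]

theorem signChar_single [DecidableEq ι] (a : ι → ZMod 2) (i : ι) :
    signChar a (Pi.single i 1) = (-1) ^ (a i).val := by
  rw [signChar_apply, dotProduct_single, mul_one]

theorem signChar_eq_neg_one {a s : ι → ZMod 2} (h : a ⬝ᵥ s ≠ 0) : signChar a s = -1 := by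
  rw [signChar_apply, (ZMod.eq_one_iff_ne_zero_mod_two _).2 h]
  norm_num [ZMod.val_one]

theorem sum_signChar_submodule_eq_zero (L : Submodule (ZMod 2) (ι → ZMod 2)) [Fintype L]
    {a : ι → ZMod 2} (h : ∃ u ∈ L, a ⬝ᵥ u ≠ 0) : ∑ u : L, signChar a u = 0 := by
  obtain ⟨u, huL, hu⟩ := h
  refine (AddChar.sum_eq_zero_iff_ne_zero
    (ψ := (signChar a).compAddMonoidHom L.subtype.toAddMonoidHom)).2
    (AddChar.ne_zero_iff.2 ⟨⟨u, huL⟩, ?_⟩)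
  norm_num [signChar_eq_neg_one hu]

end SignCharacter

section HypercubeWalk

variable {ι : Type*} [Fintype ι] [DecidableEq ι]

open scoped Classical in
noncomputable def hypercubeWalkEnds (L : Submodule (ZMod 2) (ι → ZMod 2)) (w : ℕ) :
    Multiset (ι → ZMod 2) :=
  (univ : Finset (L × (Fin w → ι))).val.map
    fun q => (q.1 : ι → ZMod 2) + ∑ j, Pi.single (q.2 j) 1

variable (L : Submodule (ZMod 2) (ι → ZMod 2)) (w : ℕ)

theorem hypercubeWalkEnds_ne_zero [Nonempty ι] : hypercubeWalkEnds L w ≠ 0 := by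
  simp [hypercubeWalkEnds, Finset.univ_nonempty.ne_empty]

theorem card_hypercubeWalkEnds :
    (hypercubeWalkEnds L w).card = Nat.card L * Fintype.card ι ^ w := by
  classical
  rw [hypercubeWalkEnds, Multiset.card_map, card_val, card_univ, Fintype.card_prod,
    Fintype.card_fun, Fintype.card_fin, Nat.card_eq_fintype_card]

open scoped Classical in
theorem sum_map_signChar_hypercubeWalkEnds (a : ι → ZMod 2) :
    ((hypercubeWalkEnds L w).map (signChar a)).sum
      = (∑ u : L, signChar a u) * (∑ i, (-1 : ℝ) ^ (a i).val) ^ w := by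
  have := (signChar a).sum_add_sum_fin_eq_mul_pow (fun u : L => (u : ι → ZMod 2))
    (fun i => Pi.single i 1) w
  simp only [signChar_single] at this
  rw [hypercubeWalkEnds, Multiset.map_map]
  exact this

theorem exists_mem_hammingDist_le_of_mem_hypercubeWalkEnds {s : ι → ZMod 2}
    (hs : s ∈ hypercubeWalkEnds L w) : ∃ u ∈ L, hammingDist s u ≤ w := by
  obtain ⟨⟨u, f⟩, -, rfl⟩ := Multiset.mem_map.1 hs
  refine ⟨u, u.2, ?_⟩
  rw [hammingDist_comm, hammingDist_eq_hammingNorm, neg_add_cancel_left, hammingNorm]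
  calc #{i | (∑ j, Pi.single (f j) 1 : ι → ZMod 2) i ≠ 0} ≤ #(univ.image f) := by
        refine card_le_card fun i hi => ?_
        contrapose! hi
        simp_all [Finset.sum_apply, Pi.single_apply, eq_comm]
    _ ≤ w := card_image_le.trans_eq (by simp)

theorem abs_sum_map_signChar_hypercubeWalkEnds_le {a : ι → ZMod 2}
    (ha : (∀ u ∈ L, a ⬝ᵥ u = 0) → IsBalanced a) :
    |((hypercubeWalkEnds L w).map (signChar a)).sum|
      ≤ (hypercubeWalkEnds L w).card * (15 / 16) ^ w := by
  classical
  rw [sum_map_signChar_hypercubeWalkEnds, card_hypercubeWalkEnds]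
  by_cases hL : ∀ u ∈ L, a ⬝ᵥ u = 0
  · have hchar : |∑ u : L, signChar a u| ≤ Nat.card L := by
      refine (abs_sum_le_sum_abs _ _).trans_eq ?_
      simp [abs_signChar, Nat.card_eq_fintype_card]
    calc |(∑ u : L, signChar a u) * (∑ i, (-1 : ℝ) ^ (a i).val) ^ w|
        = |∑ u : L, signChar a u| * |∑ i, (-1 : ℝ) ^ (a i).val| ^ w := by rw [abs_mul, abs_pow]
      _ ≤ Nat.card L * (15 / 16 * Fintype.card ι) ^ w := by
          gcongr
          exact abs_sum_neg_one_pow_val_le_of_isBalanced (ha hL)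
      _ = _ := by push_cast; ring
  · push Not at hL
    rw [sum_signChar_submodule_eq_zero L hL, zero_mul, abs_zero]
    positivity

end HypercubeWalk

theorem inv_rpow_le_pow_floor_mul_logb {x c : ℝ} (hx : 0 < x) (h : 1 ≤ c * Real.log x) :
    (15 / 16 : ℝ) ^ ⌊20 * c * Real.logb 2 x⌋₊ ≤ (x ^ c)⁻¹ := by
  set w := ⌊20 * c * Real.logb 2 x⌋₊
  have hlogb : c * Real.log x ≤ c * Real.logb 2 x := by
    rw [Real.logb, mul_div_assoc']
    exact le_div_self (by linarith) (Real.log_pos one_lt_two)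
      (Real.log_two_lt_d9.le.trans (by norm_num))
  have hw : 16 * (c * Real.log x) ≤ w := by
    have := Nat.sub_one_lt_floor (20 * c * Real.logb 2 x)
    nlinarith
  have hlog : 1 / 16 ≤ Real.log (16 / 15) := by
    have := Real.one_sub_inv_le_log_of_pos (show (0 : ℝ) < 16 / 15 by norm_num)
    norm_num at this ⊢
    linarith
  have hrpow : x ^ c ≤ (16 / 15 : ℝ) ^ w :=
    calc x ^ c = Real.exp (c * Real.log x) := by rw [Real.rpow_def_of_pos hx, mul_comm]
      _ ≤ Real.exp (w * Real.log (16 / 15)) := Real.exp_le_exp.2 (by nlinarith)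
      _ = (16 / 15 : ℝ) ^ w := by rw [← Real.log_pow, Real.exp_log (by positivity)]
  calc (15 / 16 : ℝ) ^ w = ((16 / 15 : ℝ) ^ w)⁻¹ := by rw [← inv_pow]; norm_num
    _ ≤ (x ^ c)⁻¹ := inv_anti₀ (Real.rpow_pos_of_pos hx c) hrpow

theorem expander_close_to_subspace
    (c : ℝ) (hc : 0 < c) :
    ∃ N : ℕ, ∀ n : ℕ, N ≤ n →
      ∃ (S : Multiset (Fin n → ZMod 2)) (L : Submodule (ZMod 2) (Fin n → ZMod 2)),
        S ≠ 0 ∧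
        S.map (fun s => -s) = S ∧
        Module.finrank (ZMod 2) L = n / 2 ∧
        (∀ a : Fin n → ZMod 2, a ≠ 0 →
          |(S.map (fun s => (-1 : ℝ) ^ (∑ i, a i * s i).val)).sum|
            ≤ (S.card : ℝ) / (n : ℝ) ^ c) ∧
        (∀ s ∈ S, ∃ u ∈ L, (hammingDist s u : ℝ) ≤ 20 * c * Real.logb 2 n) := by
  refine Filter.eventually_atTop.1 ?_
  filter_upwards [Filter.eventually_ge_atTop 1000,
    (Real.tendsto_log_atTop.comp tendsto_natCast_atTop_atTop).eventually_ge_atTop (1 / c)]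
    with n hn hlog
  rw [Function.comp_apply, div_le_iff₀' hc] at hlog
  obtain ⟨L, hL, hLbal⟩ := exists_finrank_eq_half_forall_orthogonal_isBalanced hn
  have : Nonempty (Fin n) := ⟨⟨0, by omega⟩⟩
  set w := ⌊20 * c * Real.logb 2 n⌋₊
  refine ⟨hypercubeWalkEnds L w, L, hypercubeWalkEnds_ne_zero L w, ?_, hL, fun a ha => ?_,
    fun s hs => ?_⟩
  · rw [show (fun s : Fin n → ZMod 2 => -s) = id from funext fun s => funext fun i =>
      ZMod.neg_eq_self_mod_two _, Multiset.map_id]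
  · calc _ ≤ (hypercubeWalkEnds L w).card * (15 / 16 : ℝ) ^ w :=
          abs_sum_map_signChar_hypercubeWalkEnds_le L w (hLbal a ha)
      _ ≤ (hypercubeWalkEnds L w).card * ((n : ℝ) ^ c)⁻¹ := by
          gcongr
          exact inv_rpow_le_pow_floor_mul_logb (by positivity) hlog
      _ = _ := (div_eq_mul_inv _ _).symm
  · obtain ⟨u, hu, hdist⟩ := exists_mem_hammingDist_le_of_mem_hypercubeWalkEnds L w hs
    have hlogb : 0 ≤ Real.logb 2 n := Real.logb_nonneg one_lt_two (by exact_mod_cast by omega)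
    exact ⟨u, hu, (Nat.cast_le.2 hdist).trans (Nat.floor_le (by positivity))⟩
end
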